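/- arXiv:1801.08407 — 5 statements merged into one kernel-verified Lean document; each statement's English description precedes it below -/
import Mathlib

section
/- Let (d2,c2) and (d'2,c'2) be elements of P(δT,δX), and write M(d2,c2) = T1^{c1}·T2^{c2}·X1^{d1}·X2^{d2} and M(d'2,c'2) = T1^{c'1}·T2^{c'2}·X1^{d'1}·X2^{d'2}. Then ev_{(δT,δX)}(M(d2,c2)) = ev_{(δT,δX)}(M(d'2,c'2)) if and only if for each i ∈ {1,2}: (q−1) divides d_i − d'_i, (q−1) divides c_i − c'_i, d_i = 0 ⟺ d'_i = 0, and c_i = 0 ⟺ c'_i = 0. -/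
open MvPolynomial

attribute [local instance] Classical.propDecidable

namespace Hirz

/-- Index type for the `(q+1)²` rational points of the Hirzebruch surface. -/
abbrev HIdx (F : Type) := (F × F) ⊕ F ⊕ F ⊕ Unit

variable (F : Type) [Field F] [Fintype F]

/-- The homogeneous coordinates of the rational points of `H_η`. -/
def pt : HIdx F → Fin 4 → F
  | Sum.inl (a, b) => ![1, a, 1, b]
  | Sum.inr (Sum.inl b) => ![0, 1, 1, b]
  | Sum.inr (Sum.inr (Sum.inl a)) => ![1, a, 0, 1]
  | Sum.inr (Sum.inr (Sum.inr _)) => ![0, 1, 0, 1]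

/-- Evaluation of a polynomial at all the rational points. -/
noncomputable def ev (P : MvPolynomial (Fin 4) F) : HIdx F → F :=
  fun i => eval (pt F i) P

/-- `c` is the exponent vector (T1,T2,X1,X2) of a monomial of bidegree `(δT, δX)`. -/
def IsBideg (η : ℕ) (δT : ℤ) (δX : ℕ) (c : Fin 4 → ℕ) : Prop :=
  (c 0 : ℤ) + (c 1 : ℤ) - (η : ℤ) * (c 2 : ℤ) = δT ∧ c 2 + c 3 = δX

/-- The monomial with exponent vector `c`. -/
noncomputable def mon (c : Fin 4 → ℕ) : MvPolynomial (Fin 4) F :=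
  monomial (Finsupp.equivFunOnFinite.symm c) (1 : F)

/-- The set of monomials of bidegree `(δT, δX)`. -/
def MSet (η : ℕ) (δT : ℤ) (δX : ℕ) : Set (MvPolynomial (Fin 4) F) :=
  {P | ∃ c : Fin 4 → ℕ, IsBideg η δT δX c ∧ P = mon F c}

/-- `R(δT,δX)`, the space of homogeneous polynomials of bidegree `(δT,δX)`. -/
noncomputable def RSpan (η : ℕ) (δT : ℤ) (δX : ℕ) : Submodule F (MvPolynomial (Fin 4) F) :=
  Submodule.span F (MSet F η δT δX)

/-- The code `C_η(δT,δX)`, image of `R(δT,δX)` under evaluation. -/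
noncomputable def Code (η : ℕ) (δT : ℤ) (δX : ℕ) : Submodule F (HIdx F → F) :=
  Submodule.span F (ev F '' MSet F η δT δX)

/-- Hamming weight. -/
noncomputable def wt (v : HIdx F → F) : ℕ := {i | v i ≠ 0}.ncard

/-- Minimum distance of `C_η(δT,δX)`. -/
noncomputable def dmin (η : ℕ) (δT : ℤ) (δX : ℕ) : ℕ :=
  sInf {w : ℕ | ∃ v ∈ Code F η δT δX, v ≠ 0 ∧ wt F v = w}

/-- `⌊A⌋` where `A = δX` if `δT ≥ 0` and `A = δ/η` otherwise. -/
def Afloor (η : ℕ) (δT : ℤ) (δX : ℕ) : ℤ :=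
  if 0 ≤ δT then (δX : ℤ) else (δT + (η : ℤ) * (δX : ℤ)) / (η : ℤ)

/-- Exponent vector of the monomial `M(d2,c2)`. -/
def Mexp (η : ℕ) (δT : ℤ) (δX : ℕ) (d2 c2 : ℕ) : Fin 4 → ℕ :=
  ![(δT + (η : ℤ) * ((δX : ℤ) - (d2 : ℤ)) - (c2 : ℤ)).toNat, c2, δX - d2, d2]

/-- The monomial `M(d2,c2) = T1^(δT+η(δX-d2)-c2) T2^c2 X1^(δX-d2) X2^d2`. -/
noncomputable def Mmon (η : ℕ) (δT : ℤ) (δX : ℕ) (d2 c2 : ℕ) : MvPolynomial (Fin 4) F :=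
  mon F (Mexp η δT δX d2 c2)

/-- The lattice polygon `P(δT,δX)`. -/
def PSet (η : ℕ) (δT : ℤ) (δX : ℕ) : Set (ℕ × ℕ) :=
  {p | (p.1 : ℤ) ≤ Afloor η δT δX ∧ (p.2 : ℤ) ≤ δT + (η : ℤ) * ((δX : ℤ) - (p.1 : ℤ))}

/-- The set `A_X = {α : α ≤ min(⌊A⌋, q-1)} ∪ ({A} ∩ ℕ)`. -/
def AX (η : ℕ) (δT : ℤ) (δX : ℕ) (q : ℕ) : Set ℕ :=
  {α | (α : ℤ) ≤ min (Afloor η δT δX) ((q : ℤ) - 1)} ∪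
    {α | if 0 ≤ δT then (α : ℤ) = (δX : ℤ)
         else (α : ℤ) * (η : ℤ) = δT + (η : ℤ) * (δX : ℤ)}

/-- The set of representatives `K(δT,δX)`. -/
def KSet (η : ℕ) (δT : ℤ) (δX : ℕ) (q : ℕ) : Set (ℕ × ℕ) :=
  {p | p.1 ∈ AX η δT δX q ∧
    ((p.2 : ℤ) ≤ min (δT + (η : ℤ) * (δX : ℤ) - (η : ℤ) * (p.1 : ℤ)) (q : ℤ) - 1 ∨
      (p.2 : ℤ) = δT + (η : ℤ) * (δX : ℤ) - (η : ℤ) * (p.1 : ℤ))}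

/-- Condition (H): `η ≥ 2`, `δT < 0`, `η ∣ δT` and `q ≤ δX + δT/η`. -/
def CondH (η : ℕ) (δT : ℤ) (δX : ℕ) (q : ℕ) : Prop :=
  2 ≤ η ∧ δT < 0 ∧ (η : ℤ) ∣ δT ∧ (q : ℤ) ≤ (δX : ℤ) + δT / (η : ℤ)

/-- `K*(δT,δX)`: `K(δT,δX)` minus `(δ/η, 0)` if (H) holds. -/
def KStar (η : ℕ) (δT : ℤ) (δX : ℕ) (q : ℕ) : Set (ℕ × ℕ) :=
  if CondH η δT δX q then
    KSet η δT δX q \ {(((δT + (η : ℤ) * (δX : ℤ)) / (η : ℤ)).toNat, 0)}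
  else KSet η δT δX q

/-- `Δ*(δT,δX) = {M(α,β) : (α,β) ∈ K*(δT,δX)}`. -/
noncomputable def DeltaStar (η : ℕ) (δT : ℤ) (δX : ℕ) (q : ℕ) :
    Set (MvPolynomial (Fin 4) F) :=
  {P | ∃ p ∈ KStar η δT δX q, P = Mmon F η δT δX p.1 p.2}


lemma zero_pow_eq_zero_pow_iff {F : Type} [Field F] (n n' : ℕ) :
    (0:F)^n = (0:F)^n' ↔ (n = 0 ↔ n' = 0) := by
  by_cases hn : n = 0 <;> by_cases hn' : n' = 0 <;>
    simp [hn, hn', zero_pow]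

lemma pow_fun_iff {F : Type} [Field F] [Fintype F] (n n' : ℕ) :
    (∀ x : F, x ^ n = x ^ n') ↔
      ((n = 0 ↔ n' = 0) ∧ ((Fintype.card F : ℤ) - 1 ∣ (n : ℤ) - (n' : ℤ))) := by
  have hq : 1 ≤ Fintype.card F := Fintype.card_pos
  have hcast : ((Fintype.card F - 1 : ℕ) : ℤ) = (Fintype.card F : ℤ) - 1 := by
    omega
  constructor
  · intro h
    refine ⟨(zero_pow_eq_zero_pow_iff n n').mp (h 0), ?_⟩
    obtain ⟨g, hg⟩ := IsCyclic.exists_generator (α := Fˣ)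
    have hord : orderOf g = Fintype.card F - 1 := by
      rw [orderOf_eq_card_of_forall_mem_zpowers hg, Nat.card_units, Nat.card_eq_fintype_card]
    have hgp : g ^ n = g ^ n' := by
      ext
      push_cast
      exact h g
    have hmod : n ≡ n' [MOD Fintype.card F - 1] := by
      rw [← hord]; exact pow_eq_pow_iff_modEq.mp hgp
    have h2 := (Nat.modEq_iff_dvd).mp hmod
    rw [hcast] at h2
    exact dvd_sub_comm.mp h2
  · rintro ⟨hiff, hdvd⟩ x
    by_cases hx : x = 0
    · subst hx
      exact (zero_pow_eq_zero_pow_iff n n').mpr hiff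
    · set u : Fˣ := Units.mk0 x hx with hu
      have h1 : u ^ (Fintype.card F - 1) = 1 := by
        ext
        push_cast [hu]
        exact FiniteField.pow_card_sub_one_eq_one x hx
      have hdvd' : orderOf u ∣ Fintype.card F - 1 := orderOf_dvd_of_pow_eq_one h1
      have hmod : n ≡ n' [MOD Fintype.card F - 1] := by
        rw [Nat.modEq_iff_dvd, hcast]
        exact dvd_sub_comm.mp hdvd
      have : u ^ n = u ^ n' := pow_eq_pow_iff_modEq.mpr (Nat.ModEq.of_dvd hdvd' hmod)
      have := congrArg Units.val this
      push_cast [hu] at this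
      exact this

lemma eval_mon' {F : Type} [Field F] (x : Fin 4 → F) (c : Fin 4 → ℕ) :
    eval x (monomial (Finsupp.equivFunOnFinite.symm c) (1 : F)) = ∏ j, x j ^ c j := by
  rw [eval_monomial, one_mul, Finsupp.prod_fintype]
  · rfl
  · intro i; exact pow_zero _

lemma mexp_facts (η : ℕ) (δT : ℤ) (δX : ℕ)
    (hη : δT < 0 → 0 < η) (p : ℕ × ℕ) (hp : p ∈ PSet η δT δX) :
    ((Mexp η δT δX p.1 p.2 0 : ℤ) = δT + (η:ℤ) * ((δX:ℤ) - (p.1:ℤ)) - (p.2:ℤ))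
    ∧ (Mexp η δT δX p.1 p.2 1 = p.2)
    ∧ ((Mexp η δT δX p.1 p.2 2 : ℤ) = (δX:ℤ) - (p.1:ℤ))
    ∧ (Mexp η δT δX p.1 p.2 3 = p.1) := by
  obtain ⟨h1, h2⟩ := hp
  have hd2 : (p.1 : ℤ) ≤ (δX : ℤ) := by
    unfold Afloor at h1
    split_ifs at h1 with h
    · exact h1
    · have hη' : (0:ℤ) < (η:ℤ) := by exact_mod_cast hη (not_le.mp h)
      calc (p.1:ℤ) ≤ (δT + (η:ℤ) * (δX:ℤ)) / (η:ℤ) := h1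
        _ ≤ ((η:ℤ) * (δX:ℤ)) / (η:ℤ) := by
            apply Int.ediv_le_ediv hη'; omega
        _ = (δX:ℤ) := Int.mul_ediv_cancel_left _ (by omega)
  refine ⟨?_, rfl, ?_, rfl⟩
  · show ((δT + (η:ℤ) * ((δX:ℤ) - (p.1:ℤ)) - (p.2:ℤ)).toNat : ℤ) = _
    rw [Int.toNat_of_nonneg]
    omega
  · show (((δX - p.1 : ℕ)) : ℤ) = _
    omega

theorem statement0' (F : Type) [Field F] [Fintype F] (η : ℕ) (δT : ℤ) (δX : ℕ)
    (hδ : 0 ≤ δT + (η : ℤ) * (δX : ℤ)) (hη : δT < 0 → 0 < η)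
    (p p' : ℕ × ℕ) (hp : p ∈ PSet η δT δX) (hp' : p' ∈ PSet η δT δX) :
    ev F (Mmon F η δT δX p.1 p.2) = ev F (Mmon F η δT δX p'.1 p'.2) ↔
      ∀ j : Fin 4,
        ((Fintype.card F : ℤ) - 1 ∣
            (Mexp η δT δX p.1 p.2 j : ℤ) - (Mexp η δT δX p'.1 p'.2 j : ℤ)) ∧
          (Mexp η δT δX p.1 p.2 j = 0 ↔ Mexp η δT δX p'.1 p'.2 j = 0) := by
  obtain ⟨e0, e1, e2, e3⟩ := mexp_facts η δT δX hη p hp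
  obtain ⟨e0', e1', e2', e3'⟩ := mexp_facts η δT δX hη p' hp'
  set c := Mexp η δT δX p.1 p.2 with hcdef
  set c' := Mexp η δT δX p'.1 p'.2 with hcdef'
  have hev : ∀ (d : Fin 4 → ℕ) (i : HIdx F),
      ev F (mon F d) i = ∏ j, pt F i j ^ d j := by
    intro d i
    simp only [ev, mon]
    exact eval_mon' _ _
  constructor
  · intro h
    have hpt : ∀ i, (∏ j, pt F i j ^ c j) = ∏ j, pt F i j ^ c' j := by
      intro i
      rw [← hev c i, ← hev c' i]
      exact congrFun h i
    have h1 : ∀ a : F, a ^ c 1 = a ^ c' 1 := by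
      intro a
      have := hpt (Sum.inl (a, 1))
      simpa [pt, Fin.prod_univ_four] using this
    have h3 : ∀ b : F, b ^ c 3 = b ^ c' 3 := by
      intro b
      have := hpt (Sum.inl (1, b))
      simpa [pt, Fin.prod_univ_four] using this
    have h0 : (0:F) ^ c 0 = (0:F) ^ c' 0 := by
      have := hpt (Sum.inr (Sum.inl 1))
      simpa [pt, Fin.prod_univ_four] using this
    have h2' : (0:F) ^ c 2 = (0:F) ^ c' 2 := by
      have := hpt (Sum.inr (Sum.inr (Sum.inl 1)))
      simpa [pt, Fin.prod_univ_four] using this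
    have k1 := (pow_fun_iff (c 1) (c' 1)).mp h1
    have k3 := (pow_fun_iff (c 3) (c' 3)).mp h3
    have k0 := (zero_pow_eq_zero_pow_iff (c 0) (c' 0)).mp h0
    have k2 := (zero_pow_eq_zero_pow_iff (c 2) (c' 2)).mp h2'
    have d1 := k1.2
    have d3 := k3.2
    intro j
    fin_cases j
    · refine ⟨?_, k0⟩
      have heq : (c 0 : ℤ) - (c' 0 : ℤ) =
          (η:ℤ) * (((c' 3 : ℕ) : ℤ) - ((c 3 : ℕ) : ℤ)) + (((c' 1 : ℕ) : ℤ) - ((c 1 : ℕ) : ℤ)) := by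
        rw [e0, e0', e1, e1', e3, e3']
        ring
      show ((Fintype.card F : ℤ) - 1) ∣ ((c 0 : ℕ) : ℤ) - ((c' 0 : ℕ) : ℤ)
      rw [heq]
      exact dvd_add ((dvd_sub_comm.mp d3).mul_left _) (dvd_sub_comm.mp d1)
    · exact ⟨d1, k1.1⟩
    · refine ⟨?_, k2⟩
      have heq : (c 2 : ℤ) - (c' 2 : ℤ) = ((c' 3 : ℕ) : ℤ) - ((c 3 : ℕ) : ℤ) := by
        rw [e2, e2', e3, e3']
        ring
      show ((Fintype.card F : ℤ) - 1) ∣ ((c 2 : ℕ) : ℤ) - ((c' 2 : ℕ) : ℤ)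
      rw [heq]
      exact dvd_sub_comm.mp d3
    · exact ⟨d3, k3.1⟩
  · intro h
    funext i
    rw [show Mmon F η δT δX p.1 p.2 = mon F c from rfl,
        show Mmon F η δT δX p'.1 p'.2 = mon F c' from rfl, hev, hev]
    refine Finset.prod_congr rfl fun j _ => ?_
    exact (pow_fun_iff (c j) (c' j)).mpr ⟨(h j).2, (h j).1⟩ (pt F i j)

/-- two monomials of `P(δT,δX)` have equal evaluation iff their exponent
vectors agree componentwise mod `q-1` and in vanishing. -/
theorem statement0 (η : ℕ) (δT : ℤ) (δX : ℕ)
    (hδ : 0 ≤ δT + (η : ℤ) * (δX : ℤ)) (hη : δT < 0 → 0 < η)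
    (p p' : ℕ × ℕ) (hp : p ∈ PSet η δT δX) (hp' : p' ∈ PSet η δT δX) :
    ev F (Mmon F η δT δX p.1 p.2) = ev F (Mmon F η δT δX p'.1 p'.2) ↔
      ∀ j : Fin 4,
        ((Fintype.card F : ℤ) - 1 ∣
            (Mexp η δT δX p.1 p.2 j : ℤ) - (Mexp η δT δX p'.1 p'.2 j : ℤ)) ∧
          (Mexp η δT δX p.1 p.2 j = 0 ↔ Mexp η δT δX p'.1 p'.2 j = 0) := by
  exact statement0' F η δT δX hδ hη p p' hp hp'

end Hirz
end

section
/- K(δT,δX) is a complete set of representatives of M(δT,δX) under the equivalence relation ≡: for every monomial M ∈ M(δT,δX) there exists a unique couple (α,β) ∈ K(δT,δX) such that ev_{(δT,δX)}(M) = ev_{(δT,δX)}(M(α,β)). -/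
open MvPolynomial

attribute [local instance] Classical.propDecidable

namespace Hirz

variable (F : Type) [Field F] [Fintype F]

/-! ### Auxiliary machinery -/

/-- Two exponents give the same power function on `F`. -/
def PE (F : Type) [Monoid F] (n m : ℕ) : Prop := ∀ x : F, x ^ n = x ^ m

theorem pe_refl (n : ℕ) : PE F n n := fun _ => rfl

theorem pe_iff (n m : ℕ) :
    PE F n m ↔ (n = 0 ∧ m = 0) ∨
      (n ≠ 0 ∧ m ≠ 0 ∧ ((Fintype.card F : ℤ) - 1) ∣ (m : ℤ) - n) := by
  classical
  have hq : 2 ≤ Fintype.card F := Fintype.one_lt_card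
  constructor
  · intro h
    have h0 := h 0
    obtain ⟨g, hg⟩ := IsCyclic.exists_ofOrder_eq_natCard (α := Fˣ)
    have hcard : orderOf g = Fintype.card F - 1 := by
      rw [hg, Nat.card_eq_fintype_card, Fintype.card_units]
    rcases Nat.eq_zero_or_pos n with hn | hn
    · subst hn
      rcases Nat.eq_zero_or_pos m with hm | hm
      · exact Or.inl ⟨rfl, hm⟩
      · exfalso; simp [zero_pow hm.ne'] at h0
    rcases Nat.eq_zero_or_pos m with hm | hm
    · exfalso; subst hm; simp [zero_pow hn.ne'] at h0
    refine Or.inr ⟨hn.ne', hm.ne', ?_⟩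
    have hgn : g ^ n = g ^ m := by
      have := h (g : F)
      exact_mod_cast Units.ext (by push_cast; exact this)
    have h2 := pow_eq_pow_iff_modEq.mp hgn
    rw [hcard] at h2
    have h3 := (Nat.modEq_iff_dvd (n := Fintype.card F - 1)).mp h2
    rwa [Nat.cast_sub (by omega), Nat.cast_one] at h3
  · rintro (⟨rfl, rfl⟩ | ⟨hn, hm, hdvd⟩) x
    · rfl
    rcases eq_or_ne x 0 with rfl | hx
    · rw [zero_pow hn, zero_pow hm]
    · lift x to Fˣ using IsUnit.mk0 x hx with u
      have hord : orderOf u ∣ Fintype.card F - 1 := by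
        rw [← Fintype.card_units]; exact orderOf_dvd_card
      have hmod : n ≡ m [MOD Fintype.card F - 1] := by
        rw [Nat.modEq_iff_dvd, Nat.cast_sub (by omega), Nat.cast_one]; exact hdvd
      have hum : u ^ n = u ^ m := pow_eq_pow_iff_modEq.mpr (hmod.of_dvd hord)
      exact_mod_cast congrArg (Units.val) hum

/-- Reduction of an exponent modulo `q - 1`, preserving positivity. -/
def red (q n : ℕ) : ℕ := if n = 0 then 0 else (n - 1) % (q - 1) + 1

theorem red_le (q n : ℕ) : red q n ≤ n := by
  unfold red; split
  · omega
  · have := Nat.mod_le (n - 1) (q - 1); omega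

theorem red_le_q {q : ℕ} (hq : 2 ≤ q) (n : ℕ) : red q n ≤ q - 1 := by
  unfold red; split
  · omega
  · have := Nat.mod_lt (n - 1) (y := q - 1) (by omega); omega

theorem red_zero_iff (q n : ℕ) : red q n = 0 ↔ n = 0 := by
  unfold red; split <;> omega

theorem red_dvd_nat (q n : ℕ) : (q - 1) ∣ n - red q n := by
  rcases Nat.eq_zero_or_pos n with rfl | hn
  · simp [red]
  refine ⟨(n - 1) / (q - 1), ?_⟩
  have h := Nat.div_add_mod (n - 1) (q - 1)
  set m := (q - 1) * ((n - 1) / (q - 1)) with hm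
  unfold red; split
  · omega
  · omega

theorem red_dvd {q : ℕ} (hq : 2 ≤ q) (n : ℕ) :
    ((q : ℤ) - 1) ∣ (n : ℤ) - (red q n : ℤ) := by
  have h := Int.natCast_dvd_natCast.mpr (red_dvd_nat q n)
  rwa [Nat.cast_sub (red_le q n), Nat.cast_sub (by omega), Nat.cast_one] at h

theorem pe_red (n : ℕ) : PE F n (red (Fintype.card F) n) := by
  have hq : 2 ≤ Fintype.card F := Fintype.one_lt_card
  rw [pe_iff]
  rcases eq_or_ne n 0 with rfl | hn
  · exact Or.inl ⟨rfl, (red_zero_iff _ _).mpr rfl⟩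
  · refine Or.inr ⟨hn, fun h => hn ((red_zero_iff _ _).mp h), ?_⟩
    have := (red_dvd hq n).neg_right
    rwa [neg_sub] at this

theorem pe_small {n m : ℕ} (h : PE F n m)
    (hn : n ≤ Fintype.card F - 1) (hm : m ≤ Fintype.card F - 1) : n = m := by
  have hq : 2 ≤ Fintype.card F := Fintype.one_lt_card
  rcases (pe_iff F n m).mp h with ⟨rfl, rfl⟩ | ⟨hn0, hm0, hdvd⟩
  · rfl
  · have h0 : (m : ℤ) - n = 0 := by
      refine Int.eq_zero_of_abs_lt_dvd hdvd ?_
      rw [abs_lt]; omega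
    omega

theorem eval_mon (p : Fin 4 → F) (c : Fin 4 → ℕ) :
    eval p (mon F c) = p 0 ^ c 0 * p 1 ^ c 1 * p 2 ^ c 2 * p 3 ^ c 3 := by
  rw [mon, eval_monomial, one_mul]
  rw [Finsupp.prod_fintype _ _ (fun i => pow_zero (p i))]
  simp [Fin.prod_univ_four]

theorem zpow_eq_of_iff {n m : ℕ} (h : n = 0 ↔ m = 0) : (0 : F) ^ n = 0 ^ m := by
  rcases eq_or_ne n 0 with rfl | hn
  · rw [h.mp rfl]
  · rw [zero_pow hn, zero_pow (fun hm => hn (h.mpr hm))]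

theorem ev_eq_iff (c c' : Fin 4 → ℕ) :
    ev F (mon F c) = ev F (mon F c') ↔
      ((c 0 = 0 ↔ c' 0 = 0) ∧ (c 2 = 0 ↔ c' 2 = 0) ∧
        PE F (c 1) (c' 1) ∧ PE F (c 3) (c' 3)) := by
  have one_ne : (1 : F) ≠ 0 := one_ne_zero
  constructor
  · intro h
    have h1 : ∀ a b : F, a ^ c 1 * b ^ c 3 = a ^ c' 1 * b ^ c' 3 := by
      intro a b
      have := congrFun h (Sum.inl (a, b))
      simpa [ev, pt, eval_mon] using this
    have hpe1 : PE F (c 1) (c' 1) := fun a => by simpa using h1 a 1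
    have hpe3 : PE F (c 3) (c' 3) := fun b => by simpa using h1 1 b
    have h2 : (0:F) ^ c 0 = 0 ^ c' 0 := by
      have := congrFun h (Sum.inr (Sum.inl 1))
      simpa [ev, pt, eval_mon] using this
    have h3 : (0:F) ^ c 2 = 0 ^ c' 2 := by
      have := congrFun h (Sum.inr (Sum.inr (Sum.inl 1)))
      simpa [ev, pt, eval_mon] using this
    have hiff : ∀ n m : ℕ, (0:F) ^ n = 0 ^ m → (n = 0 ↔ m = 0) := by
      intro n m hnm
      constructor <;> intro h0 <;> subst h0 <;> by_contra hne <;>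
        · rw [pow_zero] at hnm
          first
            | exact one_ne (by rwa [zero_pow hne] at hnm)
            | exact one_ne (by rw [zero_pow hne] at hnm; exact hnm.symm)
    exact ⟨hiff _ _ h2, hiff _ _ h3, hpe1, hpe3⟩
  · rintro ⟨h0, h2, h1, h3⟩
    funext i
    rcases i with ⟨a, b⟩ | b | a | u <;>
      simp only [ev, pt, eval_mon, Matrix.cons_val_zero, Matrix.cons_val_one, Matrix.head_cons,
        Matrix.cons_val_two, Matrix.tail_cons, Matrix.cons_val_three, one_pow, one_mul, mul_one]
    · rw [h1 a, h3 b]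
    · rw [zpow_eq_of_iff F h0, h3 b]
    · rw [zpow_eq_of_iff F h2, h1 a]
    · rw [zpow_eq_of_iff F h0, zpow_eq_of_iff F h2]

theorem Mexp_entries (η : ℕ) (δT : ℤ) (δX : ℕ) (a b : ℕ) :
    Mexp η δT δX a b 0 = (δT + (η : ℤ) * ((δX : ℤ) - (a : ℤ)) - (b : ℤ)).toNat ∧
    Mexp η δT δX a b 1 = b ∧ Mexp η δT δX a b 2 = δX - a ∧ Mexp η δT δX a b 3 = a :=
  ⟨rfl, rfl, rfl, rfl⟩

theorem mem_uniq (η : ℕ) (δT : ℤ) (δX : ℕ)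
    (hδ : 0 ≤ δT + (η : ℤ) * (δX : ℤ)) (hη : δT < 0 → 0 < η)
    {p p' : ℕ × ℕ} (hp : p ∈ KSet η δT δX (Fintype.card F))
    (hp' : p' ∈ KSet η δT δX (Fintype.card F))
    (h : ev F (Mmon F η δT δX p.1 p.2) = ev F (Mmon F η δT δX p'.1 p'.2)) : p = p' := by
  classical
  obtain ⟨α, β⟩ := p; obtain ⟨α', β'⟩ := p'
  set q := Fintype.card F with hqdef
  have hq : 2 ≤ q := Fintype.one_lt_card
  rw [Mmon, Mmon, ev_eq_iff] at h
  obtain ⟨E0, E1, E2, E3⟩ := Mexp_entries η δT δX α β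
  obtain ⟨E0', E1', E2', E3'⟩ := Mexp_entries η δT δX α' β'
  rw [E0, E0', E1, E1', E2, E2', E3, E3'] at h
  obtain ⟨h0, h2, h1, h3⟩ := h
  obtain ⟨hA, hB⟩ := hp
  obtain ⟨hA', hB'⟩ := hp'
  simp only [AX, Set.mem_union, Set.mem_setOf_eq] at hA hA'
  have hrw : ∀ a b : ℕ, δT + (η:ℤ) * ((δX:ℤ) - (a:ℤ)) - (b:ℤ)
      = δT + (η:ℤ)*(δX:ℤ) - (η:ℤ)*(a:ℤ) - (b:ℤ) := by intros; ring
  rw [hrw, hrw] at h0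
  obtain ⟨NA, hNA⟩ : ∃ x : ℤ, δT + (η:ℤ)*(δX:ℤ) - (η:ℤ)*(α:ℤ) = x := ⟨_, rfl⟩
  obtain ⟨NA', hNA'⟩ : ∃ x : ℤ, δT + (η:ℤ)*(δX:ℤ) - (η:ℤ)*(α':ℤ) = x := ⟨_, rfl⟩
  have hNAsub : ∀ b : ℕ, δT + (η:ℤ)*(δX:ℤ) - (η:ℤ)*(α:ℤ) - (b:ℤ) = NA - b := by
    intro b; rw [← hNA]
  have hNAsub' : ∀ b : ℕ, δT + (η:ℤ)*(δX:ℤ) - (η:ℤ)*(α':ℤ) - (b:ℤ) = NA' - b := by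
    intro b; rw [← hNA']
  rw [hNAsub, hNAsub'] at h0
  rw [show δT + (η : ℤ) * (δX : ℤ) - (η : ℤ) * ((α:ℕ) : ℤ) = NA from hNA] at hB
  rw [show δT + (η : ℤ) * (δX : ℤ) - (η : ℤ) * ((α':ℕ) : ℤ) = NA' from hNA'] at hB'
  -- basic bounds
  have hβNA : (β:ℤ) ≤ NA ∧ 0 ≤ NA := by omega
  have hβNA' : (β':ℤ) ≤ NA' ∧ 0 ≤ NA' := by omega
  -- first: α = α'
  have hαα' : α = α' := by
    by_cases hδT : 0 ≤ δT
    · simp only [Afloor, hδT, if_true] at hA hA'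
      by_cases hs : (α:ℤ) = (δX:ℤ) <;> by_cases hs' : (α':ℤ) = (δX:ℤ)
      · omega
      · exfalso
        have hle : (α':ℤ) ≤ (δX:ℤ) := by rcases hA' with hh | hh <;> omega
        omega
      · exfalso
        have hle : (α:ℤ) ≤ (δX:ℤ) := by rcases hA with hh | hh <;> omega
        omega
      · have hsm : (α:ℤ) ≤ (q:ℤ) - 1 := by rcases hA with hh | hh <;> omega
        have hsm' : (α':ℤ) ≤ (q:ℤ) - 1 := by rcases hA' with hh | hh <;> omega
        exact pe_small F h3 (by omega) (by omega)
    · have hη0 : (0:ℤ) < (η:ℤ) := by exact_mod_cast hη (lt_of_not_ge hδT)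
      simp only [Afloor, hδT, if_false] at hA hA'
      have hcm : ∀ a : ℕ, (η:ℤ)*(a:ℤ) = (a:ℤ)*(η:ℤ) := fun a => mul_comm _ _
      by_cases hs : (α:ℤ)*(η:ℤ) = δT + (η:ℤ)*(δX:ℤ)
        <;> by_cases hs' : (α':ℤ)*(η:ℤ) = δT + (η:ℤ)*(δX:ℤ)
      · have : (α:ℤ) = (α':ℤ) := mul_right_cancel₀ hη0.ne' (by rw [hs, hs'])
        omega
      · exfalso
        have hNA0 : NA = 0 := by
          rw [← hNA]; have := hcm α; linarith
        have hNA'0 : NA' ≠ 0 := by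
          intro hz
          apply hs'
          have h5 := hNA'; have := hcm α'; linarith
        have hβ0 : β = 0 := by omega
        have hβ'N : (β':ℤ) = NA' := by omega
        rcases (pe_iff F β β').mp h1 with ⟨_, hz⟩ | ⟨hz, _, _⟩
        · omega
        · exact hz hβ0
      · exfalso
        have hNA0 : NA' = 0 := by
          rw [← hNA']; have := hcm α'; linarith
        have hNA'0 : NA ≠ 0 := by
          intro hz
          apply hs
          have h5 := hNA; have := hcm α; linarith
        have hβ0 : β' = 0 := by omega
        have hβN : (β:ℤ) = NA := by omega
        rcases (pe_iff F β β').mp h1 with ⟨hz, _⟩ | ⟨_, hz, _⟩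
        · omega
        · exact hz hβ0
      · have hsm : (α:ℤ) ≤ (q:ℤ) - 1 := by rcases hA with hh | hh <;> omega
        have hsm' : (α':ℤ) ≤ (q:ℤ) - 1 := by rcases hA' with hh | hh <;> omega
        exact pe_small F h3 (by omega) (by omega)
  -- then: β = β'
  have hNAeq : NA = NA' := by rw [← hNA, ← hNA', hαα']
  have hββ' : β = β' := by
    rcases hB with hb | hb <;> rcases hB' with hb' | hb'
    · exact pe_small F h1 (by omega) (by omega)
    · exfalso; omega
    · exfalso; omega
    · omega
  rw [hαα', hββ']

theorem mem_exists (η : ℕ) (δT : ℤ) (δX : ℕ)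
    (hδ : 0 ≤ δT + (η : ℤ) * (δX : ℤ)) (hη : δT < 0 → 0 < η)
    (c : Fin 4 → ℕ) (hb : IsBideg η δT δX c) :
    ∃ p : ℕ × ℕ, p ∈ KSet η δT δX (Fintype.card F) ∧
      ev F (mon F c) = ev F (Mmon F η δT δX p.1 p.2) := by
  classical
  obtain ⟨hbT, hbX⟩ := hb
  set q := Fintype.card F with hqdef
  have hq : 2 ≤ q := Fintype.one_lt_card
  have hcm : ∀ a : ℕ, (η:ℤ)*(a:ℤ) = (a:ℤ)*(η:ℤ) := fun a => mul_comm _ _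
  have hd1 : (c 2 : ℤ) = (δX : ℤ) - (c 3 : ℤ) := by omega
  have hc0 : (c 0 : ℤ) = δT + (η:ℤ)*(δX:ℤ) - (η:ℤ)*(c 3 : ℤ) - (c 1 : ℤ) := by
    have hmul := mul_sub (η:ℤ) (δX:ℤ) (c 3 : ℤ)
    rw [hd1] at hbT; linarith
  set Sp : Prop := (0 ≤ δT ∧ c 3 = δX) ∨ (¬ (0 ≤ δT) ∧ (η:ℤ)*(c 3 : ℤ) = δT + (η:ℤ)*(δX:ℤ))
    with hSpdef
  set α : ℕ := if Sp then c 3 else red q (c 3) with hαdef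
  have hαle : α ≤ c 3 := by
    rw [hαdef]; split
    · exact le_refl _
    · exact red_le _ _
  have hαmul : (η:ℤ)*(α:ℤ) ≤ (η:ℤ)*(c 3 : ℤ) :=
    mul_le_mul_of_nonneg_left (by exact_mod_cast hαle) (by positivity)
  set β : ℕ := if c 0 = 0 then (δT + (η:ℤ)*(δX:ℤ) - (η:ℤ)*(α:ℤ)).toNat else red q (c 1)
    with hβdef
  -- opaque names for the two key integer quantities
  obtain ⟨NN, hNN⟩ : ∃ x : ℤ, δT + (η:ℤ)*(δX:ℤ) - (η:ℤ)*(c 3 : ℤ) = x := ⟨_, rfl⟩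
  obtain ⟨NN', hNN'⟩ : ∃ x : ℤ, δT + (η:ℤ)*(δX:ℤ) - (η:ℤ)*(α:ℤ) = x := ⟨_, rfl⟩
  have hNle : NN ≤ NN' := by rw [← hNN, ← hNN']; linarith
  have hN0 : 0 ≤ NN := by
    rw [← hNN]
    have h1 : (0:ℤ) ≤ (c 0 : ℤ) := Int.natCast_nonneg _
    have h2 : (0:ℤ) ≤ (c 1 : ℤ) := Int.natCast_nonneg _
    linarith
  have hN'0 : 0 ≤ NN' := le_trans hN0 hNle
  have hNzero : NN = 0 → NN' = 0 := by
    intro hz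
    by_cases hS : Sp
    · rw [← hNN', hαdef, if_pos hS, hNN]; exact hz
    · rw [hSpdef] at hS
      by_cases hδT : 0 ≤ δT
      · by_cases hη0 : η = 0
        · subst hη0
          simp only [Nat.cast_zero, zero_mul, sub_zero] at hNN hNN'
          omega
        · exfalso; apply hS; left; refine ⟨hδT, ?_⟩
          have hpos : (0:ℤ) < (η:ℤ) := by exact_mod_cast Nat.pos_of_ne_zero hη0
          have h1 : (η:ℤ)*(δX:ℤ) ≤ (η:ℤ)*(c 3:ℤ) := by linarith [hNN]
          have h2 : (δX:ℤ) ≤ (c 3:ℤ) := le_of_mul_le_mul_left h1 hpos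
          omega
      · exfalso; apply hS; right; exact ⟨hδT, by linarith [hNN]⟩
  have hβval : c 0 = 0 → (β:ℤ) = NN' := by
    intro h0; rw [hβdef, if_pos h0, hNN']; exact Int.toNat_of_nonneg hN'0
  have hc1N : (c 1:ℤ) ≤ NN := by
    have h1 : (0:ℤ) ≤ (c 0 : ℤ) := Int.natCast_nonneg _
    linarith [hNN, hc0]
  have hc1top : c 0 = 0 → (c 1:ℤ) = NN := by
    intro h0
    have : ((c 0 : ℕ) : ℤ) = 0 := by exact_mod_cast congrArg (Nat.cast (R := ℤ)) h0
    linarith [hNN, hc0]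
  have hβred : c 0 ≠ 0 → β = red q (c 1) := fun h => by rw [hβdef, if_neg h]
  have hPEα : PE F (c 3) α := by
    rw [hαdef]; split
    · exact pe_refl F _
    · exact pe_red F _
  have hPEβ : PE F (c 1) β := by
    by_cases h0 : c 0 = 0
    · have hc1 : (c 1:ℤ) = NN := hc1top h0
      have hβ : (β:ℤ) = NN' := hβval h0
      rw [pe_iff, ← hqdef]
      rcases eq_or_ne NN 0 with hz | hz
      · left
        have := hNzero hz
        constructor <;> omega
      · right
        refine ⟨by omega, by omega, ?_⟩
        have hd : NN' - NN = (η:ℤ) * ((c 3:ℤ) - (α:ℤ)) := by rw [← hNN, ← hNN']; ring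
        have hdvd : ((q:ℤ)-1) ∣ ((c 3:ℤ) - (α:ℤ)) := by
          rw [hαdef]; split
          · simp
          · exact red_dvd hq _
        have hdvd2 : ((q:ℤ)-1) ∣ NN' - NN := hd ▸ hdvd.mul_left (η:ℤ)
        rw [show (β:ℤ) - (c 1:ℤ) = NN' - NN by omega]
        exact hdvd2
    · rw [hβred h0]; exact pe_red F _
  refine ⟨(α, β), ⟨?_, ?_⟩, ?_⟩
  · -- α ∈ AX
    simp only [AX, Set.mem_union, Set.mem_setOf_eq]
    by_cases hS : Sp
    · right
      have hSor := hS
      rw [hSpdef] at hSor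
      rcases hSor with ⟨hδT, h3⟩ | ⟨hδT, h3⟩
      · rw [if_pos hδT, hαdef, if_pos hS, h3]
      · rw [if_neg hδT, hαdef, if_pos hS, ← hcm]; exact h3
    · left
      have hαred : α = red q (c 3) := by rw [hαdef, if_neg hS]
      have h1 : α ≤ q - 1 := hαred ▸ red_le_q hq _
      rw [Afloor]
      by_cases hδT : 0 ≤ δT
      · rw [if_pos hδT]
        have h2 : α ≤ δX := le_trans hαle (by omega)
        omega
      · rw [if_neg hδT]
        have hη0 : (0:ℤ) < (η:ℤ) := by exact_mod_cast hη (lt_of_not_ge hδT)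
        refine le_min ?_ (by omega)
        rw [Int.le_ediv_iff_mul_le hη0]
        have h2 : (α:ℤ)*(η:ℤ) ≤ (η:ℤ)*(c 3:ℤ) := by linarith [hcm α, hαmul]
        linarith [hNN, hN0]
  · -- β condition
    by_cases h0 : c 0 = 0
    · right; rw [hNN']; exact hβval h0
    · left
      rw [hNN']
      have h1 : β ≤ q - 1 := (hβred h0) ▸ red_le_q hq _
      have h2 : (β:ℤ) ≤ (c 1:ℤ) := by
        rw [hβred h0]; exact_mod_cast red_le q (c 1)
      have h3 : 1 ≤ (c 0:ℤ) := by exact_mod_cast Nat.pos_of_ne_zero h0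
      have h4 : (c 1:ℤ) ≤ NN - 1 := by linarith [hc0, hNN]
      omega
  · -- ev equality
    rw [Mmon, ev_eq_iff]
    obtain ⟨E0, E1, E2, E3⟩ := Mexp_entries η δT δX α β
    rw [E0, E1, E2, E3]
    have hE0 : (δT + (η:ℤ)*((δX:ℤ) - (α:ℤ)) - (β:ℤ)) = NN' - (β:ℤ) := by rw [← hNN']; ring
    rw [hE0]
    refine ⟨?_, ?_, hPEβ, hPEα⟩
    · constructor
      · intro h0; have := hβval h0; omega
      · intro hE; by_contra h0
        have h2 : (β:ℤ) ≤ (c 1:ℤ) := by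
          rw [hβred h0]; exact_mod_cast red_le q (c 1)
        have h3 : 1 ≤ (c 0:ℤ) := by exact_mod_cast Nat.pos_of_ne_zero h0
        have h4 : (c 1:ℤ) ≤ NN - 1 := by linarith [hc0, hNN]
        omega
    · have hkey : c 3 = δX → α = δX := by
        intro h3
        by_cases hδT : 0 ≤ δT
        · rw [hαdef, if_pos (show Sp by rw [hSpdef]; exact Or.inl ⟨hδT, h3⟩)]; exact h3
        · exfalso
          have h2z : c 2 = 0 := by omega
          rw [h2z] at hbT
          simp only [Nat.cast_zero, mul_zero, sub_zero] at hbT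
          omega
      constructor
      · intro h2z
        have h3 : c 3 = δX := by omega
        have := hkey h3; omega
      · intro hz; omega

/-- `K(δT,δX)` is a complete set of representatives of the monomials of
bidegree `(δT,δX)` under the equivalence `ev M = ev M'`. -/
theorem statement1 (η : ℕ) (δT : ℤ) (δX : ℕ)
    (hδ : 0 ≤ δT + (η : ℤ) * (δX : ℤ)) (hη : δT < 0 → 0 < η)
    (M : MvPolynomial (Fin 4) F) (hM : M ∈ MSet F η δT δX) :
    ∃! p : ℕ × ℕ, p ∈ KSet η δT δX (Fintype.card F) ∧
      ev F M = ev F (Mmon F η δT δX p.1 p.2) := by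
  obtain ⟨c, hb, rfl⟩ := hM
  obtain ⟨p, hp, hev⟩ := mem_exists F η δT δX hδ hη c hb
  refine ⟨p, ⟨hp, hev⟩, ?_⟩
  rintro p' ⟨hp', hev'⟩
  exact mem_uniq F η δT δX hδ hη hp' hp (hev'.symm.trans hev)

end Hirz
end

section
/- If δT ≥ q and δX ≥ q, then the evaluation map ev_{(δT,δX)} : R(δT,δX) → 𝔽_q^{(q+1)²} is surjective; in particular dim C_η(δT,δX) = (q+1)². -/
/-!
Since `δT ≥ q` and `δX ≥ q`, every rational point of `H_η` has an indicator of bidegree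
`(δT, δX)`: the product of a form in `T₁, T₂` that vanishes at every point of `ℙ¹(𝔽_q)` except
the `T`-part of the point, and a form in `X₁ T^η, X₂` doing the same for the `X`-part, where `T`
is the coordinate among `T₁, T₂` equal to `1` at the point. Vanishing off a point of `ℙ¹(𝔽_q)`
costs a product over the `q` or `q - 1` other points, whence the bound `q` on the degrees.
Scaling the indicators gives every standard basis vector, so evaluation is onto.
-/

open MvPolynomial

attribute [local instance] Classical.propDecidable

namespace Hirz

variable (F : Type) [Field F] [Fintype F]

open Finset

section ProjectiveLine

variable {K σ : Type*} [Field K]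

/-- Points of `ℙ¹(K)`: `some a` is `(1 : a)` and `none` is `(0 : 1)`. -/
def p1Point : Option K → K × K
  | some a => (1, a)
  | none => (0, 1)

variable [Fintype K]

noncomputable def p1Indicator (Y₀ Y₁ : MvPolynomial σ K) (d : ℕ) : Option K → MvPolynomial σ K
  | some a => Y₀ ^ (d + 1) * ∏ c ∈ univ.erase a, (Y₁ - C c * Y₀)
  | none => Y₁ ^ d * ∏ c, (Y₁ - C c * Y₀)

theorem isWeightedHomogeneous_p1Indicator {M : Type*} [AddCommMonoid M] {w : σ → M} {m : M}
    {Y₀ Y₁ : MvPolynomial σ K} (h₀ : IsWeightedHomogeneous w Y₀ m)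
    (h₁ : IsWeightedHomogeneous w Y₁ m) (d : ℕ) (p : Option K) :
    IsWeightedHomogeneous w (p1Indicator Y₀ Y₁ d p) ((d + Fintype.card K) • m) := by
  have hlin : ∀ c : K, IsWeightedHomogeneous w (Y₁ - C c * Y₀) m := fun c => h₁.sub (h₀.C_mul c)
  have hprod (s : Finset K) : IsWeightedHomogeneous w (∏ c ∈ s, (Y₁ - C c * Y₀)) (#s • m) := by
    simpa using IsWeightedHomogeneous.prod s _ (fun _ => m) fun c _ => hlin c
  cases p with
  | some a =>
    have h := (h₀.pow (d + 1)).mul (hprod (univ.erase a))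
    rwa [← add_nsmul, card_erase_of_mem (mem_univ a), card_univ, Nat.add_assoc,
      Nat.add_sub_cancel' Fintype.card_pos] at h
  | none =>
    have h := (h₁.pow d).mul (hprod univ)
    rwa [← add_nsmul, card_univ] at h

theorem eval_p1Indicator_ne_zero {Y₀ Y₁ : MvPolynomial σ K} {x : σ → K} {p : Option K}
    (h₀ : eval x Y₀ = (p1Point p).1) (h₁ : eval x Y₁ = (p1Point p).2) (d : ℕ) :
    eval x (p1Indicator Y₀ Y₁ d p) ≠ 0 := by
  cases p with
  | some a =>
    simp only [p1Indicator, p1Point] at h₀ h₁ ⊢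
    simp only [map_mul, map_pow, map_prod, map_sub, eval_C, h₀, h₁, one_pow, one_mul, mul_one]
    exact prod_ne_zero_iff.2 fun c hc => sub_ne_zero.2 (ne_of_mem_erase hc).symm
  | none =>
    simp only [p1Indicator, p1Point] at h₀ h₁ ⊢
    simp [h₀, h₁]

theorem eval_p1Indicator_eq_zero {Y₀ Y₁ : MvPolynomial σ K} {x : σ → K} {p p' : Option K}
    (h₀ : eval x Y₀ = (p1Point p').1) (h₁ : eval x Y₁ = (p1Point p').2) (hp : p ≠ p') (d : ℕ) :
    eval x (p1Indicator Y₀ Y₁ d p) = 0 := by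
  cases p with
  | some a =>
    cases p' with
    | some a' =>
      simp only [p1Indicator, p1Point] at h₀ h₁ ⊢
      simp only [map_mul, map_pow, map_prod, map_sub, eval_C, h₀, h₁, mul_one]
      exact mul_eq_zero_of_right _ <|
        prod_eq_zero (mem_erase.2 ⟨fun h => hp (by rw [h]), mem_univ a'⟩) (sub_self a')
    | none =>
      simp only [p1Point] at h₀
      simp [p1Indicator, h₀]
  | none =>
    cases p' with
    | some a' =>
      simp only [p1Indicator, p1Point] at h₀ h₁ ⊢
      simp only [map_mul, map_pow, map_prod, map_sub, eval_C, h₀, h₁, mul_one]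
      exact mul_eq_zero_of_right _ <| prod_eq_zero (mem_univ a') (sub_self a')
    | none => exact absurd rfl hp

end ProjectiveLine

section Points

variable {K : Type} [Field K]

/-- Records the point `(t₁, t₂, x₁, x₂)` by the points `(t₁ : t₂)` and `(x₁ : x₂)` of `ℙ¹(K)`. -/
def pointEquiv : HIdx K ≃ Option K × Option K where
  toFun
    | .inl (a, b) => (some a, some b)
    | .inr (.inl b) => (none, some b)
    | .inr (.inr (.inl a)) => (some a, none)
    | .inr (.inr (.inr _)) => (none, none)
  invFun
    | (some a, some b) => .inl (a, b)
    | (none, some b) => .inr (.inl b)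
    | (some a, none) => .inr (.inr (.inl a))
    | (none, none) => .inr (.inr (.inr ()))
  left_inv := by rintro (⟨a, b⟩ | b | a | ⟨⟩) <;> rfl
  right_inv := by rintro ⟨_ | a, _ | b⟩ <;> rfl

theorem pt_eq_p1Point (i : HIdx K) :
    pt K i = ![(p1Point (pointEquiv i).1).1, (p1Point (pointEquiv i).1).2,
      (p1Point (pointEquiv i).2).1, (p1Point (pointEquiv i).2).2] := by
  rcases i with ⟨a, b⟩ | b | a | _ <;> rfl

/-- The variable among `T₁, T₂` equal to `1` at the points over `t`, used to give `X₁` the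
bidegree `(0, 1)` of `X₂`. -/
def homogVar : Option K → Fin 4
  | some _ => 0
  | none => 1

theorem pt_homogVar (i : HIdx K) : pt K i (homogVar (pointEquiv i).1) = 1 := by
  rcases i with ⟨a, b⟩ | b | a | _ <;> rfl

/-- Bihomogeneity of bidegree `(δT, δX)` is weighted homogeneity for these weights. -/
def bidegWeight (η : ℕ) : Fin 4 → ℤ × ℤ := ![(1, 0), (1, 0), (-η, 1), (0, 1)]

theorem weight_bidegWeight (η : ℕ) (d : Fin 4 →₀ ℕ) :
    Finsupp.weight (bidegWeight η) d = ((d 0 + d 1 - η * d 2 : ℤ), (d 2 + d 3 : ℤ)) := by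
  rw [Finsupp.weight_apply, Finsupp.sum_fintype _ _ (by simp), Fin.sum_univ_four]
  ext <;> simp [bidegWeight]
  ring

theorem mem_RSpan_of_isWeightedHomogeneous {η : ℕ} {δT : ℤ} {δX : ℕ}
    {P : MvPolynomial (Fin 4) K}
    (h : IsWeightedHomogeneous (bidegWeight η) P (δT, δX)) : P ∈ RSpan K η δT δX := by
  rw [P.as_sum]
  refine Submodule.sum_mem _ fun d hd => ?_
  have hd := h (mem_support_iff.1 hd)
  rw [weight_bidegWeight, Prod.mk.injEq] at hd
  rw [← mul_one (coeff d P), ← smul_eq_mul, ← smul_monomial]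
  refine Submodule.smul_mem _ _ (Submodule.subset_span ⟨d, ⟨hd.1, by omega⟩, ?_⟩)
  rw [mon, Finsupp.equivFunOnFinite_symm_coe]

noncomputable def evLinearMap : MvPolynomial (Fin 4) K →ₗ[K] HIdx K → K :=
  LinearMap.pi fun i => (aeval (pt K i)).toLinearMap

theorem Code_eq_map_RSpan (η : ℕ) (δT : ℤ) (δX : ℕ) :
    Code K η δT δX = (RSpan K η δT δX).map evLinearMap := by
  rw [Code, RSpan, Submodule.map_span]
  rfl

variable [Fintype K]

noncomputable def pointIndicator (η mT mX : ℕ) (i : HIdx K) : MvPolynomial (Fin 4) K :=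
  p1Indicator (X 0) (X 1) mT (pointEquiv i).1 *
    p1Indicator (X 2 * X (homogVar (pointEquiv i).1) ^ η) (X 3) mX (pointEquiv i).2

theorem eval_pointIndicator_self (η mT mX : ℕ) (i : HIdx K) :
    eval (pt K i) (pointIndicator η mT mX i) ≠ 0 := by
  rw [pointIndicator, map_mul]
  have hY : eval (pt K i) (X 2 * X (homogVar (pointEquiv i).1) ^ η) =
      (p1Point (pointEquiv i).2).1 := by
    rw [map_mul, map_pow, eval_X, eval_X, pt_homogVar, one_pow, mul_one, pt_eq_p1Point]; rfl
  refine mul_ne_zero (eval_p1Indicator_ne_zero ?_ ?_ mT) (eval_p1Indicator_ne_zero hY ?_ mX) <;>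
    rw [eval_X, pt_eq_p1Point] <;> rfl

theorem eval_pointIndicator_of_ne (η mT mX : ℕ) {i j : HIdx K} (hij : i ≠ j) :
    eval (pt K j) (pointIndicator η mT mX i) = 0 := by
  rw [pointIndicator, map_mul]
  have hT₀ : eval (pt K j) (X 0) = (p1Point (pointEquiv j).1).1 := by rw [eval_X, pt_eq_p1Point]; rfl
  have hT₁ : eval (pt K j) (X 1) = (p1Point (pointEquiv j).1).2 := by rw [eval_X, pt_eq_p1Point]; rfl
  by_cases ht : (pointEquiv i).1 = (pointEquiv j).1
  · have hY : eval (pt K j) (X 2 * X (homogVar (pointEquiv i).1) ^ η) =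
        (p1Point (pointEquiv j).2).1 := by
      rw [ht, map_mul, map_pow, eval_X, eval_X, pt_homogVar, one_pow, mul_one, pt_eq_p1Point]; rfl
    have hx : (pointEquiv i).2 ≠ (pointEquiv j).2 := fun hx =>
      hij (pointEquiv.injective (Prod.ext ht hx))
    refine mul_eq_zero_of_right _ (eval_p1Indicator_eq_zero hY ?_ hx mX)
    rw [eval_X, pt_eq_p1Point]; rfl
  · exact mul_eq_zero_of_left (eval_p1Indicator_eq_zero hT₀ hT₁ ht mT) _

theorem isWeightedHomogeneous_pointIndicator (η mT mX : ℕ) (i : HIdx K) :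
    IsWeightedHomogeneous (bidegWeight η) (pointIndicator η mT mX i)
      ((mT + Fintype.card K : ℕ), (mX + Fintype.card K : ℕ)) := by
  have hX (k : Fin 4) : IsWeightedHomogeneous (bidegWeight η) (X k : MvPolynomial (Fin 4) K)
      (bidegWeight η k) := isWeightedHomogeneous_X K _ k
  have hY : IsWeightedHomogeneous (bidegWeight η)
      (X 2 * X (homogVar (pointEquiv i).1) ^ η : MvPolynomial (Fin 4) K) (0, 1) := by
    convert (hX 2).mul ((hX _).pow η) using 1
    cases (pointEquiv i).1 <;> simp [bidegWeight, homogVar]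
  rw [pointIndicator]
  convert (isWeightedHomogeneous_p1Indicator (hX 0) (hX 1) mT (pointEquiv i).1).mul
    (isWeightedHomogeneous_p1Indicator hY (hX 3) mX (pointEquiv i).2) using 1
  rw [show bidegWeight η 0 = (1, 0) from rfl]
  simp

theorem map_evLinearMap_RSpan_eq_top {η : ℕ} {δT : ℤ} {δX : ℕ} (hT : (Fintype.card K : ℤ) ≤ δT)
    (hX : Fintype.card K ≤ δX) : (RSpan K η δT δX).map evLinearMap = ⊤ := by
  obtain ⟨mT, rfl⟩ : ∃ mT : ℕ, δT = (mT + Fintype.card K : ℕ) :=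
    ⟨(δT - Fintype.card K).toNat, by omega⟩
  obtain ⟨mX, rfl⟩ : ∃ mX : ℕ, δX = mX + Fintype.card K := ⟨δX - Fintype.card K, by omega⟩
  rw [eq_top_iff, ← (Pi.basisFun K (HIdx K)).span_eq, Submodule.span_le]
  rintro _ ⟨i, rfl⟩
  set P := pointIndicator η mT mX i
  refine ⟨(eval (pt K i) P)⁻¹ • P, Submodule.smul_mem _ _
    (mem_RSpan_of_isWeightedHomogeneous (isWeightedHomogeneous_pointIndicator η mT mX i)), ?_⟩
  funext j
  rw [LinearMap.map_smul, Pi.basisFun_apply, Pi.smul_apply, smul_eq_mul]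
  rcases eq_or_ne i j with rfl | hij
  · rw [Pi.single_eq_same]
    exact inv_mul_cancel₀ (eval_pointIndicator_self η mT mX i)
  · rw [Pi.single_eq_of_ne hij.symm]
    exact mul_eq_zero_of_right _ (eval_pointIndicator_of_ne η mT mX hij)

end Points

/-- if `δT ≥ q` and `δX ≥ q` then the evaluation map is surjective on
`R(δT,δX)`, and in particular `dim C_η(δT,δX) = (q+1)²`. -/
theorem statement6 (η : ℕ) (δT : ℤ) (δX : ℕ)
    (hT : (Fintype.card F : ℤ) ≤ δT) (hX : Fintype.card F ≤ δX) :
    (∀ v : HIdx F → F, ∃ P ∈ RSpan F η δT δX, ev F P = v) ∧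
      Module.finrank F (Code F η δT δX) = (Fintype.card F + 1) ^ 2 := by
  have htop := map_evLinearMap_RSpan_eq_top (η := η) hT hX
  refine ⟨fun v => Submodule.mem_map.1 (htop ▸ Submodule.mem_top), ?_⟩
  rw [Code_eq_map_RSpan, htop, finrank_top, Module.finrank_fintype_fun_eq_card]
  simp only [HIdx, Fintype.card_sum, Fintype.card_prod, Fintype.card_unit]
  ring

end Hirz
end

section
/- Assume η ≥ 2 and (δT,δX) ∈ ℤ×ℕ with δ := δT+η·δX ≥ 0. Set A := δX if δT ≥ 0 and A := δ/η if δT < 0; m := min(⌊A⌋, q−1); h := min(δT,q)+1 if δT ≥ 0 and q ≤ δX, and h := 0 otherwise; s := (δ−q)/η (a rational number); and s̃ := ⌊s⌋ if 0 ≤ s ≤ m, s̃ := −1 if s < 0, s̃ := m if s > m. Then dim C_η(δT,δX) = (q+1)(s̃+1) + (m−s̃)(δ+1) − η·(m(m+1) − s̃(s̃+1))/2 + h. -/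
open MvPolynomial

attribute [local instance] Classical.propDecidable

namespace Hirz

variable (F : Type) [Field F] [Fintype F]

/-!
A monomial of bidegree `(δT, δX)` is determined by the lattice point `(α, β)` of the polygon
`P(δT, δX)` given by its exponents of `X2` and `T2`. On the chart `T1 = X1 = 1` it evaluates
to `a ^ β * b ^ α`; on the other charts, where `T1` or `X1` vanishes, its values also record
whether `β` is the top `δ - ηα` of column `α` and whether `α = δX`. Since `x ^ q = x`, every
such vector is a combination of those indexed by `basisIdx`: the columns `α ≤ m` (and the
column `δX` when `δT ≥ 0` and `q ≤ δX`), each cut down to its top and the `β < q` below it.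
Higher columns are shifted down by `q - 1`, which raises their top by `η(q - 1)`. The remaining
vectors are independent: read the corner `T1 = X1 = 0`, then the charts `X1 = 0`, `T1 = 0` and
`T1 = X1 = 1` in turn, where every exponent left is `< q`. Finally a column `α ≤ m` contributes
`q + 1` points exactly when `α ≤ s̃`, and `δ - ηα + 1` otherwise.
-/

variable {F}

section FiniteFieldPowers

local notation "q" => Fintype.card F

theorem pow_add_mul_card_sub_one (x : F) {n : ℕ} (hn : n ≠ 0) (k : ℕ) :
    x ^ (n + k * (q - 1)) = x ^ n := by
  have hq : 1 < q := Fintype.one_lt_card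
  induction k with
  | zero => simp
  | succ k ih =>
    calc x ^ (n + (k + 1) * (q - 1)) = x ^ (n + k * (q - 1) - 1) * x ^ q := by
          rw [← pow_add]; congr 1; rw [add_mul]; omega
      _ = x ^ n := by
          rw [FiniteField.pow_card, ← pow_succ, Nat.sub_add_cancel (by omega), ih]

theorem exists_le_lt_card_forall_pow_eq (n : ℕ) :
    ∃ r ≤ n, r < q ∧ ∀ x : F, x ^ n = x ^ r := by
  induction n using Nat.strong_induction_on with
  | _ n ih =>
    by_cases hn : n < q
    · exact ⟨n, le_rfl, hn, fun _ => rfl⟩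
    have hq : 1 < q := Fintype.one_lt_card
    obtain ⟨r, hr, hrq, hpow⟩ := ih (n - (q - 1)) (by omega)
    refine ⟨r, by omega, hrq, fun x => ?_⟩
    rw [← hpow, ← pow_add_mul_card_sub_one x (by omega : n - (q - 1) ≠ 0) 1]
    congr 1
    omega

theorem eval_monomial_equivFunOnFinite_symm {R σ : Type*} [CommSemiring R] [Fintype σ]
    (c : σ → ℕ) (a : R) (x : σ → R) :
    eval x (monomial (Finsupp.equivFunOnFinite.symm c) a) = a * ∏ j, x j ^ c j := by
  rw [eval_monomial, Finsupp.prod_fintype _ _ (fun j => pow_zero _)]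
  simp

theorem eq_zero_of_forall_sum_mul_prod_pow_eq_zero {σ : Type} {ι : Type*} [Fintype σ]
    {s : Finset ι} {e : ι → σ → ℕ} (he : Set.InjOn e s) (hlt : ∀ i ∈ s, ∀ j, e i j < q) {c : ι → F}
    (h : ∀ x : σ → F, ∑ i ∈ s, c i * ∏ j, x j ^ e i j = 0) : ∀ i ∈ s, c i = 0 := by
  set P : MvPolynomial σ F := ∑ i ∈ s, monomial (Finsupp.equivFunOnFinite.symm (e i)) (c i)
  have hP : P = 0 := by
    refine eq_zero_of_eval_eq_zero σ F P (fun x => ?_) ?_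
    · simp only [P, map_sum, eval_monomial_equivFunOnFinite_symm, h]
    · refine Submodule.sum_mem _ fun i hi => ?_
      rw [mem_restrictDegree]
      intro t ht j
      rw [Finset.mem_singleton.mp (support_monomial_subset ht)]
      exact Nat.le_sub_one_of_lt (hlt i hi j)
  intro i hi
  have hcoeff := congrArg (coeff (Finsupp.equivFunOnFinite.symm (e i))) hP
  rwa [coeff_zero, coeff_sum, Finset.sum_eq_single_of_mem i hi, coeff_monomial, if_pos rfl]
    at hcoeff
  intro k hk hki
  rw [coeff_monomial, if_neg]
  exact fun hk' => hki (he hk hi (Finsupp.equivFunOnFinite.symm.injective hk'))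

theorem eq_zero_of_forall_sum_mul_pow_eq_zero {ι : Type*} {s : Finset ι} {e : ι → ℕ}
    (he : Set.InjOn e s) (hlt : ∀ i ∈ s, e i < q) {c : ι → F}
    (h : ∀ x : F, ∑ i ∈ s, c i * x ^ e i = 0) : ∀ i ∈ s, c i = 0 :=
  eq_zero_of_forall_sum_mul_prod_pow_eq_zero (σ := Unit) (e := fun i _ => e i)
    (fun i hi k hk hik => he hi hk (congrFun hik ())) (fun i hi _ => hlt i hi)
    (fun x => by simpa using h (x ()))

end FiniteFieldPowers

/-- The height `δ - ηα` of column `α` of the polygon `P(δT,δX)`. -/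
def colTop (η : ℕ) (δT : ℤ) (δX : ℕ) (α : ℕ) : ℤ := δT + (η : ℤ) * ((δX : ℤ) - (α : ℤ))

variable (F) in
/-- `ev F (Mmon F η δT δX α β)` (see `ev_Mmon`), with the powers of `T1` and `X1` that vanish at
`0` written as indicators. -/
noncomputable def monVec (η : ℕ) (δT : ℤ) (δX : ℕ) (α β : ℕ) : HIdx F → F
  | Sum.inl (a, b) => a ^ β * b ^ α
  | Sum.inr (Sum.inl b) => (if (β : ℤ) = colTop η δT δX α then 1 else 0) * b ^ α
  | Sum.inr (Sum.inr (Sum.inl a)) => a ^ β * if α = δX then 1 else 0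
  | Sum.inr (Sum.inr (Sum.inr _)) =>
      (if (β : ℤ) = colTop η δT δX α then 1 else 0) * if α = δX then 1 else 0

section Polygon

variable {η : ℕ} {δT : ℤ} {δX : ℕ}

theorem Afloor_nonneg (hη : 0 < η) (hδ : 0 ≤ δT + (η : ℤ) * (δX : ℤ)) :
    0 ≤ Afloor η δT δX := by
  unfold Afloor
  split_ifs
  · positivity
  · exact Int.ediv_nonneg hδ (by positivity)

theorem Afloor_lt_of_neg (hη : 0 < η) (hδT : δT < 0) : Afloor η δT δX < δX := by
  rw [Afloor, if_neg hδT.not_ge, Int.ediv_lt_iff_lt_mul (by positivity)]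
  nlinarith

theorem natCast_le_Afloor_iff (hη : 0 < η) {α : ℕ} :
    (α : ℤ) ≤ Afloor η δT δX ↔ α ≤ δX ∧ (η : ℤ) * α ≤ δT + (η : ℤ) * (δX : ℤ) := by
  unfold Afloor
  split_ifs with hδT
  · constructor
    · intro h
      exact ⟨by exact_mod_cast h, by nlinarith⟩
    · exact fun h => by exact_mod_cast h.1
  · rw [Int.le_ediv_iff_mul_le (by positivity)]
    constructor
    · intro h
      refine ⟨?_, by linarith⟩
      have : (α : ℤ) < δX := by nlinarith
      omega
    · exact fun h => by linarith [h.2]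

theorem colTop_nonneg (hη : 0 < η) {α : ℕ} (hα : (α : ℤ) ≤ Afloor η δT δX) :
    0 ≤ colTop η δT δX α := by
  have := (natCast_le_Afloor_iff hη).mp hα
  unfold colTop
  linarith

theorem mem_PSet_iff (hη : 0 < η) {p : ℕ × ℕ} :
    p ∈ PSet η δT δX ↔ p.1 ≤ δX ∧ (p.2 : ℤ) ≤ colTop η δT δX p.1 := by
  rw [PSet, Set.mem_ofPred_eq, natCast_le_Afloor_iff hη, colTop]
  constructor
  · rintro ⟨⟨h1, -⟩, h2⟩
    exact ⟨h1, h2⟩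
  · rintro ⟨h1, h2⟩
    exact ⟨⟨h1, by linarith [(Nat.cast_nonneg p.2 : (0 : ℤ) ≤ p.2)]⟩, h2⟩

theorem colTop_sub {α k : ℕ} (hk : k ≤ α) :
    colTop η δT δX (α - k) = colTop η δT δX α + η * k := by
  rw [colTop, colTop, Nat.cast_sub hk]
  ring

theorem isBideg_Mexp {p : ℕ × ℕ} (hp : p ∈ PSet η δT δX) (hpX : p.1 ≤ δX) :
    IsBideg η δT δX (Mexp η δT δX p.1 p.2) := by
  have h0 : 0 ≤ colTop η δT δX p.1 - p.2 := sub_nonneg.mpr hp.2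
  show ((colTop η δT δX p.1 - p.2).toNat : ℤ) + p.2 - η * ((δX - p.1 : ℕ) : ℤ) = δT ∧
    δX - p.1 + p.1 = δX
  rw [Int.toNat_of_nonneg h0, Nat.cast_sub hpX, colTop]
  exact ⟨by ring, by omega⟩

theorem Mexp_eq_of_isBideg {c : Fin 4 → ℕ} (hc : IsBideg η δT δX c) :
    Mexp η δT δX (c 3) (c 1) = c := by
  obtain ⟨h1, h2⟩ := hc
  have h0 : δT + (η : ℤ) * ((δX : ℤ) - (c 3 : ℕ)) - (c 1 : ℕ) = c 0 := by
    rw [← h2]; push_cast; linarith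
  have h3 : δX - c 3 = c 2 := by omega
  ext j
  fin_cases j <;> simp [Mexp, h0, h3]

theorem mem_PSet_of_isBideg (hη : 0 < η) {c : Fin 4 → ℕ} (hc : IsBideg η δT δX c) :
    (c 3, c 1) ∈ PSet η δT δX := by
  obtain ⟨h1, h2⟩ := hc
  rw [mem_PSet_iff hη, colTop]
  refine ⟨by omega, ?_⟩
  rw [← h2]; push_cast; linarith [(Nat.cast_nonneg (c 0) : (0 : ℤ) ≤ c 0)]

omit [Fintype F] in
theorem MSet_eq_image_PSet (hη : 0 < η) :
    MSet F η δT δX = (fun p => Mmon F η δT δX p.1 p.2) '' PSet η δT δX := by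
  ext P
  constructor
  · rintro ⟨c, hc, rfl⟩
    exact ⟨(c 3, c 1), mem_PSet_of_isBideg hη hc, by simp [Mmon, Mexp_eq_of_isBideg hc]⟩
  · rintro ⟨p, hp, rfl⟩
    exact ⟨_, isBideg_Mexp hp ((mem_PSet_iff hη).mp hp).1, rfl⟩

omit [Fintype F] in
theorem ev_Mmon (hη : 0 < η) {p : ℕ × ℕ} (hp : p ∈ PSet η δT δX) :
    ev F (Mmon F η δT δX p.1 p.2) = monVec F η δT δX p.1 p.2 := by
  obtain ⟨hX, hT⟩ := (mem_PSet_iff hη).mp hp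
  have hT0 : (δT + (η : ℤ) * ((δX : ℤ) - p.1)).toNat - p.2 = 0 ↔
      (p.2 : ℤ) = colTop η δT δX p.1 := by
    rw [colTop] at hT ⊢; omega
  have hX0 : δX - p.1 = 0 ↔ p.1 = δX := by omega
  funext i
  rcases i with ⟨a, b⟩ | b | a | u <;>
    simp [ev, Mmon, mon, eval_monomial_equivFunOnFinite_symm, Fin.prod_univ_four, pt, Mexp,
      monVec, zero_pow_eq, hX0, hT0]

omit [Fintype F] in
theorem Code_eq_span_monVec (hη : 0 < η) :
    Code F η δT δX = Submodule.span F ((fun p => monVec F η δT δX p.1 p.2) '' PSet η δT δX) := by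
  rw [Code, MSet_eq_image_PSet hη, Set.image_image]
  exact congrArg _ (Set.image_congr fun p hp => ev_Mmon hη hp)

end Polygon

def mNat (η : ℕ) (δT : ℤ) (δX : ℕ) (q : ℕ) : ℕ := (min (Afloor η δT δX) ((q : ℤ) - 1)).toNat

def column (η : ℕ) (δT : ℤ) (δX : ℕ) (q : ℕ) (α : ℕ) : Finset ℕ :=
  insert (colTop η δT δX α).toNat (Finset.range (min (colTop η δT δX α).toNat q))

def basisCols (η : ℕ) (δT : ℤ) (δX : ℕ) (q : ℕ) : Finset ℕ :=
  if 0 ≤ δT ∧ q ≤ δX then insert δX (Finset.range (mNat η δT δX q + 1))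
  else Finset.range (mNat η δT δX q + 1)

/-- As a set, this is `KStar η δT δX q` when `η ≥ 2`. -/
def basisIdx (η : ℕ) (δT : ℤ) (δX : ℕ) (q : ℕ) : Finset (ℕ × ℕ) :=
  (basisCols η δT δX q).biUnion fun α => {α} ×ˢ column η δT δX q α

section BasisIdx

variable {η : ℕ} {δT : ℤ} {δX : ℕ} {q : ℕ}

theorem mem_column {α β : ℕ} :
    β ∈ column η δT δX q α ↔
      β < min (colTop η δT δX α).toNat q ∨ β = (colTop η δT δX α).toNat := by
  rw [column, Finset.mem_insert, Finset.mem_range, or_comm]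

theorem card_column (α : ℕ) :
    (column η δT δX q α).card = min (colTop η δT δX α).toNat q + 1 := by
  rw [column, Finset.card_insert_of_notMem (by simp), Finset.card_range]

theorem mNat_cast (hη : 0 < η) (hδ : 0 ≤ δT + (η : ℤ) * (δX : ℤ)) (hq : 0 < q) :
    (mNat η δT δX q : ℤ) = min (Afloor η δT δX) ((q : ℤ) - 1) :=
  Int.toNat_of_nonneg (le_min (Afloor_nonneg hη hδ) (by omega))

theorem mem_basisCols {α : ℕ} :
    α ∈ basisCols η δT δX q ↔ α ≤ mNat η δT δX q ∨ (0 ≤ δT ∧ q ≤ δX ∧ α = δX) := by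
  unfold basisCols
  split_ifs with h <;> simp [h] <;> tauto

theorem mem_basisIdx {p : ℕ × ℕ} :
    p ∈ basisIdx η δT δX q ↔ p.1 ∈ basisCols η δT δX q ∧ p.2 ∈ column η δT δX q p.1 := by
  simp only [basisIdx, Finset.mem_biUnion, Finset.mem_product, Finset.mem_singleton]
  constructor
  · rintro ⟨α, hα, rfl, hβ⟩
    exact ⟨hα, hβ⟩
  · exact fun h => ⟨p.1, h.1, rfl, h.2⟩

variable (hη : 0 < η) (hδ : 0 ≤ δT + (η : ℤ) * (δX : ℤ)) (hq : 0 < q)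

include hη hδ hq in
theorem le_Afloor_of_mem_basisCols {α : ℕ} (hα : α ∈ basisCols η δT δX q) :
    (α : ℤ) ≤ Afloor η δT δX := by
  rcases mem_basisCols.mp hα with hα | ⟨hδT, -, rfl⟩
  · have := mNat_cast hη hδ hq
    omega
  · simp [Afloor, hδT]

include hη hδ hq in
theorem mem_PSet_of_mem_basisIdx {p : ℕ × ℕ} (hp : p ∈ basisIdx η δT δX q) :
    p ∈ PSet η δT δX := by
  obtain ⟨hα, hβ⟩ := mem_basisIdx.mp hp
  have hA := le_Afloor_of_mem_basisCols hη hδ hq hα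
  have hT := colTop_nonneg hη hA
  refine ⟨hA, ?_⟩
  rcases mem_column.mp hβ with hβ | hβ <;> rw [← colTop] <;> omega

include hη hδ hq in
theorem fst_lt_of_mem_basisIdx {p : ℕ × ℕ} (hp : p ∈ basisIdx η δT δX q) (hpX : p.1 ≠ δX) :
    p.1 < q := by
  have := mNat_cast hη hδ hq
  rcases mem_basisCols.mp (mem_basisIdx.mp hp).1 with h | h <;> omega

include hη hδ hq in
theorem snd_lt_of_mem_basisIdx {p : ℕ × ℕ} (hp : p ∈ basisIdx η δT δX q)
    (hpT : (p.2 : ℤ) ≠ colTop η δT δX p.1) : p.2 < q := by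
  obtain ⟨hα, hβ⟩ := mem_basisIdx.mp hp
  have hT := colTop_nonneg hη (le_Afloor_of_mem_basisCols hη hδ hq hα)
  rcases mem_column.mp hβ with hβ | hβ <;> omega

theorem mem_basisIdx_of_eq_colTop {α β : ℕ} (hα : α ∈ basisCols η δT δX q)
    (hβ : (β : ℤ) = colTop η δT δX α) : (α, β) ∈ basisIdx η δT δX q :=
  mem_basisIdx.mpr ⟨hα, mem_column.mpr (Or.inr (by dsimp only; omega))⟩

theorem mem_basisIdx_of_lt {α β : ℕ} (hα : α ∈ basisCols η δT δX q)
    (hβT : (β : ℤ) < colTop η δT δX α) (hβq : β < q) : (α, β) ∈ basisIdx η δT δX q :=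
  mem_basisIdx.mpr ⟨hα, mem_column.mpr (Or.inl (by dsimp only; omega))⟩

include hη hδ hq in
theorem card_basisIdx :
    ((basisIdx η δT δX q).card : ℤ) =
      ∑ α ∈ Finset.range (mNat η δT δX q + 1), (min (colTop η δT δX α) q + 1) +
        if 0 ≤ δT ∧ q ≤ δX then min δT q + 1 else 0 := by
  have hcol : ∀ α ∈ basisCols η δT δX q,
      (((column η δT δX q α).card : ℕ) : ℤ) = min (colTop η δT δX α) q + 1 := by
    intro α hα
    have hT := colTop_nonneg hη (le_Afloor_of_mem_basisCols hη hδ hq hα)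
    rw [card_column]
    omega
  rw [basisIdx, Finset.card_biUnion]
  · simp only [Finset.card_product, Finset.card_singleton, one_mul]
    rw [Nat.cast_sum, Finset.sum_congr rfl hcol]
    unfold basisCols
    split_ifs with h
    · have : δX ∉ Finset.range (mNat η δT δX q + 1) := by
        have := mNat_cast hη hδ hq
        simp only [Finset.mem_range]
        omega
      rw [Finset.sum_insert this, add_comm, colTop, sub_self, mul_zero, add_zero]
    · rw [add_zero]
  · intro α _ α' _ hne
    simp only [Function.onFun, Finset.disjoint_left, Finset.mem_product, Finset.mem_singleton]
    exact fun p hp hp' => hne (hp.1.symm.trans hp'.1)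

include hη hδ hq in
theorem card_le_and_lt_of_notMem_basisCols {α β : ℕ} (hp : (α, β) ∈ PSet η δT δX)
    (hα : α ∉ basisCols η δT δX q) : q ≤ α ∧ α < δX := by
  have hA : (α : ℤ) ≤ Afloor η δT δX := hp.1
  have hαX := ((natCast_le_Afloor_iff hη).mp hA).1
  have hm := mNat_cast hη hδ hq
  rw [mem_basisCols, not_or] at hα
  refine ⟨by omega, lt_of_le_of_ne hαX fun hαX' => ?_⟩
  rcases le_or_gt 0 δT with hδT | hδT
  · exact hα.2 ⟨hδT, by omega, hαX'⟩
  · have := Afloor_lt_of_neg (δX := δX) hη hδT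
    omega

end BasisIdx

section Span

variable {η : ℕ} {δT : ℤ} {δX : ℕ}

local notation "q" => Fintype.card F

omit [Fintype F] in
theorem monVec_congr {α β α' β' : ℕ} (hα : ∀ x : F, x ^ α = x ^ α')
    (hβ : ∀ x : F, x ^ β = x ^ β')
    (hT : (β : ℤ) = colTop η δT δX α ↔ (β' : ℤ) = colTop η δT δX α')
    (hX : α = δX ↔ α' = δX) :
    monVec F η δT δX α β = monVec F η δT δX α' β' := by
  funext i
  rcases i with ⟨a, b⟩ | b | a | u <;> simp only [monVec, hα, hβ, if_congr hT rfl rfl,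
    if_congr hX rfl rfl]

theorem monVec_mem_span_of_mem_basisCols {α β : ℕ} (hα : α ∈ basisCols η δT δX q)
    (hβ : (β : ℤ) ≤ colTop η δT δX α) :
    monVec F η δT δX α β ∈
      Submodule.span F
        ((fun p => monVec F η δT δX p.1 p.2) '' (basisIdx η δT δX q : Set (ℕ × ℕ))) := by
  rcases hβ.lt_or_eq with hβ | hβ
  · obtain ⟨r, hrβ, hrq, hpow⟩ := exists_le_lt_card_forall_pow_eq (F := F) β
    rw [monVec_congr (fun _ => rfl) hpow (iff_of_false (by omega) (by omega)) Iff.rfl]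
    exact Submodule.subset_span ⟨(α, r), mem_basisIdx_of_lt hα (by omega) hrq, rfl⟩
  · exact Submodule.subset_span ⟨(α, β), mem_basisIdx_of_eq_colTop hα hβ, rfl⟩

section ColumnShift

variable {α β : ℕ} (hqα : Fintype.card F ≤ α) (hαX : α < δX)
include hqα

theorem pow_sub_card_sub_one (x : F) : x ^ α = x ^ (α - (q - 1)) := by
  have hq : 1 < q := Fintype.one_lt_card
  rw [← pow_add_mul_card_sub_one x (by omega : α - (q - 1) ≠ 0) 1]
  congr 1
  omega

include hαX

theorem monVec_eq_monVec_sub_of_lt (hβ : (β : ℤ) < colTop η δT δX α) :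
    monVec F η δT δX α β = monVec F η δT δX (α - (q - 1)) β := by
  have hT := colTop_sub (η := η) (δT := δT) (δX := δX) (by omega : q - 1 ≤ α)
  refine monVec_congr (pow_sub_card_sub_one hqα) (fun _ => rfl)
    (iff_of_false (by omega) ?_) (iff_of_false (by omega) (by omega))
  rw [hT]
  have : (0 : ℤ) ≤ η * ((q - 1 : ℕ) : ℤ) := by positivity
  omega

theorem monVec_eq_monVec_sub_of_eq (hβ : (β : ℤ) = colTop η δT δX α) (hβ0 : β ≠ 0) :
    monVec F η δT δX α β = monVec F η δT δX (α - (q - 1)) (β + η * (q - 1)) := by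
  have hT := colTop_sub (η := η) (δT := δT) (δX := δX) (by omega : q - 1 ≤ α)
  refine monVec_congr (pow_sub_card_sub_one hqα)
    (fun x => (pow_add_mul_card_sub_one x hβ0 η).symm)
    (iff_of_true hβ (by rw [hT, ← hβ]; push_cast; ring)) (iff_of_false (by omega) (by omega))

/-- A column of height `0` is not a shift of another column. Instead `M(α', η(q-1))` and
`M(α', q-1)` agree off the chart `T1 = 0`, as `x ^ (η(q-1)) = x ^ (q-1)`, but only the first one
is a top, nonzero on that chart. -/
theorem monVec_eq_of_colTop_eq_zero (hη : 2 ≤ η) (hT0 : colTop η δT δX α = 0) :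
    monVec F η δT δX α 0 =
      monVec F η δT δX (α - (q - 1)) (η * (q - 1)) + monVec F η δT δX (α - (q - 1)) 0 -
        monVec F η δT δX (α - (q - 1)) (q - 1) := by
  have hq : 1 < q := Fintype.one_lt_card
  have hT := colTop_sub (η := η) (δT := δT) (δX := δX) (by omega : q - 1 ≤ α)
  rw [hT0, zero_add] at hT
  have hηq : ((η * (q - 1) : ℕ) : ℤ) = η * ((q - 1 : ℕ) : ℤ) := by push_cast; ring
  have hlt : ((q - 1 : ℕ) : ℤ) < η * ((q - 1 : ℕ) : ℤ) := by
    have : (1 : ℤ) ≤ ((q - 1 : ℕ) : ℤ) := by omega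
    nlinarith
  have hpow (x : F) : x ^ (η * (q - 1)) = x ^ (q - 1) := by
    rw [← pow_add_mul_card_sub_one x (by omega : q - 1 ≠ 0) (η - 1)]
    congr 1
    conv_lhs => rw [(by omega : η = η - 1 + 1)]
    ring
  funext i
  rcases i with ⟨a, b⟩ | b | a | u
  · simp only [monVec, Pi.add_apply, Pi.sub_apply, hpow, ← pow_sub_card_sub_one hqα]
    ring
  · simp only [monVec, Pi.add_apply, Pi.sub_apply, ← pow_sub_card_sub_one hqα, hT, hT0, hηq]
    rw [if_pos Nat.cast_zero, if_pos trivial, if_neg (by omega), if_neg hlt.ne]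
    ring
  · simp only [monVec, Pi.add_apply, Pi.sub_apply, if_neg (by omega : α ≠ δX),
      if_neg (by omega : α - (q - 1) ≠ δX)]
    ring
  · simp only [monVec, Pi.add_apply, Pi.sub_apply, if_neg (by omega : α ≠ δX),
      if_neg (by omega : α - (q - 1) ≠ δX)]
    ring

end ColumnShift

theorem monVec_mem_span_basisIdx (hη : 2 ≤ η) (hδ : 0 ≤ δT + (η : ℤ) * (δX : ℤ)) {α β : ℕ}
    (hp : (α, β) ∈ PSet η δT δX) :
    monVec F η δT δX α β ∈
      Submodule.span F
        ((fun p => monVec F η δT δX p.1 p.2) '' (basisIdx η δT δX q : Set (ℕ × ℕ))) := by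
  have hη0 : 0 < η := by omega
  have hq : 1 < q := Fintype.one_lt_card
  induction α using Nat.strong_induction_on generalizing β with
  | _ α ih =>
  have hβ : (β : ℤ) ≤ colTop η δT δX α := ((mem_PSet_iff hη0).mp hp).2
  by_cases hα : α ∈ basisCols η δT δX q
  · exact monVec_mem_span_of_mem_basisCols hα hβ
  obtain ⟨hqα, hαX⟩ := card_le_and_lt_of_notMem_basisCols hη0 hδ (by omega) hp hα
  have hT := colTop_sub (η := η) (δT := δT) (δX := δX) (by omega : q - 1 ≤ α)
  have ih' (β' : ℕ) (hβ' : (β' : ℤ) ≤ colTop η δT δX α + η * (q - 1 : ℕ)) :=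
    ih (α - (q - 1)) (by omega) ((mem_PSet_iff hη0).mpr ⟨by omega, by rwa [hT]⟩)
  have hηq : (0 : ℤ) ≤ η * (q - 1 : ℕ) := by positivity
  rcases hβ.lt_or_eq with hβ | hβ
  · rw [monVec_eq_monVec_sub_of_lt hqα hαX hβ]
    exact ih' β (by omega)
  rcases eq_or_ne β 0 with rfl | hβ0
  · rw [monVec_eq_of_colTop_eq_zero hqα hαX hη (by omega)]
    exact sub_mem (add_mem (ih' _ (by push_cast; omega)) (ih' 0 (by omega)))
      (ih' _ (by nlinarith))
  · rw [monVec_eq_monVec_sub_of_eq hqα hαX hβ hβ0]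
    exact ih' _ (by push_cast; omega)

theorem Code_eq_span_basisIdx (hη : 2 ≤ η) (hδ : 0 ≤ δT + (η : ℤ) * (δX : ℤ)) :
    Code F η δT δX = Submodule.span F
      ((fun p => monVec F η δT δX p.1 p.2) '' (basisIdx η δT δX q : Set (ℕ × ℕ))) := by
  have hη0 : 0 < η := by omega
  rw [Code_eq_span_monVec hη0]
  refine le_antisymm (Submodule.span_le.mpr ?_) (Submodule.span_mono (Set.image_mono ?_))
  · rintro _ ⟨p, hp, rfl⟩
    exact monVec_mem_span_basisIdx hη hδ hp
  · exact fun p hp => mem_PSet_of_mem_basisIdx hη0 hδ Fintype.card_pos hp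

end Span

section Independence

variable {η : ℕ} {δT : ℤ} {δX : ℕ} (hη : 0 < η) (hδ : 0 ≤ δT + (η : ℤ) * (δX : ℤ))
  {G : ℕ × ℕ → F}
  (hG : ∑ p ∈ basisIdx η δT δX (Fintype.card F), G p • monVec F η δT δX p.1 p.2 = 0)

local notation "q" => Fintype.card F

include hG

theorem sum_mul_monVec_apply_eq_zero (i : HIdx F) :
    ∑ p ∈ basisIdx η δT δX q, G p * monVec F η δT δX p.1 p.2 i = 0 := by
  simpa using congrFun hG i

theorem coeff_eq_zero_of_fst_eq_of_snd_eq {p : ℕ × ℕ} (hp : p ∈ basisIdx η δT δX q)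
    (h1 : p.1 = δX) (h2 : (p.2 : ℤ) = colTop η δT δX p.1) : G p = 0 := by
  have e := sum_mul_monVec_apply_eq_zero hG (Sum.inr (Sum.inr (Sum.inr ())))
  rw [Finset.sum_eq_single_of_mem p hp] at e
  · rwa [monVec, if_pos h2, if_pos h1, mul_one, mul_one] at e
  · intro p' _ hne
    simp only [monVec]
    split_ifs with h2' h1' <;> simp only [mul_zero, mul_one]
    rw [h1'] at h2'
    rw [h1] at h2
    exact absurd (Prod.ext (h1'.trans h1.symm) (by omega)) hne

include hη hδ

theorem coeff_eq_zero_of_fst_eq {p : ℕ × ℕ} (hp : p ∈ basisIdx η δT δX q) (h1 : p.1 = δX) :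
    G p = 0 := by
  by_cases h2 : (p.2 : ℤ) = colTop η δT δX p.1
  · exact coeff_eq_zero_of_fst_eq_of_snd_eq hG hp h1 h2
  refine eq_zero_of_forall_sum_mul_pow_eq_zero (e := Prod.snd)
    (s := (basisIdx η δT δX q).filter fun p => p.1 = δX ∧ (p.2 : ℤ) ≠ colTop η δT δX p.1)
    (fun p hp p' hp' h => ?_) (fun p hp => ?_) (fun a => ?_) p
    (Finset.mem_filter.mpr ⟨hp, h1, h2⟩)
  · simp only [Finset.coe_filter, Set.mem_ofPred_eq] at hp hp'
    exact Prod.ext (hp.2.1.trans hp'.2.1.symm) h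
  · simp only [Finset.mem_filter] at hp
    exact snd_lt_of_mem_basisIdx hη hδ Fintype.card_pos hp.1 hp.2.2
  · have e := sum_mul_monVec_apply_eq_zero hG (Sum.inr (Sum.inr (Sum.inl a)))
    rw [← Finset.sum_filter_of_ne (p := fun p => p.1 = δX ∧ (p.2 : ℤ) ≠ colTop η δT δX p.1)]
      at e
    · rw [← e]
      refine Finset.sum_congr rfl fun p hp => ?_
      simp [monVec, (Finset.mem_filter.mp hp).2.1]
    · intro p hp hne
      have hp1 : p.1 = δX := by
        by_contra h
        simp [monVec, h] at hne
      refine ⟨hp1, fun hp2 => hne ?_⟩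
      rw [coeff_eq_zero_of_fst_eq_of_snd_eq hG hp hp1 hp2, zero_mul]

theorem coeff_eq_zero_of_snd_eq {p : ℕ × ℕ} (hp : p ∈ basisIdx η δT δX q)
    (h2 : (p.2 : ℤ) = colTop η δT δX p.1) : G p = 0 := by
  by_cases h1 : p.1 = δX
  · exact coeff_eq_zero_of_fst_eq hη hδ hG hp h1
  refine eq_zero_of_forall_sum_mul_pow_eq_zero (e := Prod.fst)
    (s := (basisIdx η δT δX q).filter fun p => p.1 ≠ δX ∧ (p.2 : ℤ) = colTop η δT δX p.1)
    (fun p hp p' hp' h => ?_) (fun p hp => ?_) (fun b => ?_) p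
    (Finset.mem_filter.mpr ⟨hp, h1, h2⟩)
  · simp only [Finset.coe_filter, Set.mem_ofPred_eq] at hp hp'
    have := hp.2.2.trans (h ▸ hp'.2.2.symm)
    exact Prod.ext h (by omega)
  · simp only [Finset.mem_filter] at hp
    exact fst_lt_of_mem_basisIdx hη hδ Fintype.card_pos hp.1 hp.2.1
  · have e := sum_mul_monVec_apply_eq_zero hG (Sum.inr (Sum.inl b))
    rw [← Finset.sum_filter_of_ne (p := fun p => p.1 ≠ δX ∧ (p.2 : ℤ) = colTop η δT δX p.1)]
      at e
    · rw [← e]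
      refine Finset.sum_congr rfl fun p hp => ?_
      simp [monVec, (Finset.mem_filter.mp hp).2.2]
    · intro p hp hne
      refine ⟨fun hp1 => hne ?_, ?_⟩
      · rw [coeff_eq_zero_of_fst_eq hη hδ hG hp hp1, zero_mul]
      · by_contra h
        simp [monVec, h] at hne

theorem coeff_eq_zero_of_mem_basisIdx {p : ℕ × ℕ} (hp : p ∈ basisIdx η δT δX q) : G p = 0 := by
  by_cases h1 : p.1 = δX
  · exact coeff_eq_zero_of_fst_eq hη hδ hG hp h1
  by_cases h2 : (p.2 : ℤ) = colTop η δT δX p.1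
  · exact coeff_eq_zero_of_snd_eq hη hδ hG hp h2
  refine eq_zero_of_forall_sum_mul_prod_pow_eq_zero (σ := Fin 2) (e := fun p => ![p.2, p.1])
    (s := (basisIdx η δT δX q).filter fun p => p.1 ≠ δX ∧ (p.2 : ℤ) ≠ colTop η δT δX p.1)
    (fun p _ p' _ h => Prod.ext (congrFun h 1) (congrFun h 0)) (fun p hp j => ?_) (fun x => ?_)
    p (Finset.mem_filter.mpr ⟨hp, h1, h2⟩)
  · simp only [Finset.mem_filter] at hp
    fin_cases j
    · exact snd_lt_of_mem_basisIdx hη hδ Fintype.card_pos hp.1 hp.2.2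
    · exact fst_lt_of_mem_basisIdx hη hδ Fintype.card_pos hp.1 hp.2.1
  · have e := sum_mul_monVec_apply_eq_zero hG (Sum.inl (x 0, x 1))
    rw [← Finset.sum_filter_of_ne (p := fun p => p.1 ≠ δX ∧ (p.2 : ℤ) ≠ colTop η δT δX p.1)]
      at e
    · rw [← e]
      refine Finset.sum_congr rfl fun p _ => ?_
      simp [monVec, Fin.prod_univ_two]
    · intro p hp hne
      refine ⟨fun hp1 => hne ?_, fun hp2 => hne ?_⟩
      · rw [coeff_eq_zero_of_fst_eq hη hδ hG hp hp1, zero_mul]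
      · rw [coeff_eq_zero_of_snd_eq hη hδ hG hp hp2, zero_mul]

end Independence

section Dimension

variable {η : ℕ} {δT : ℤ} {δX : ℕ}

local notation "q" => Fintype.card F

theorem linearIndepOn_monVec_basisIdx (hη : 0 < η) (hδ : 0 ≤ δT + (η : ℤ) * (δX : ℤ)) :
    LinearIndepOn F (fun p => monVec F η δT δX p.1 p.2) (basisIdx η δT δX q : Set (ℕ × ℕ)) :=
  linearIndepOn_finset_iff.mpr fun _ hG _ hp => coeff_eq_zero_of_mem_basisIdx hη hδ hG hp

theorem finrank_Code (hη : 2 ≤ η) (hδ : 0 ≤ δT + (η : ℤ) * (δX : ℤ)) :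
    Module.finrank F (Code F η δT δX) = (basisIdx η δT δX q).card := by
  rw [Code_eq_span_basisIdx hη hδ, Set.image_eq_range,
    finrank_span_eq_card (linearIndepOn_monVec_basisIdx (by omega) hδ)]
  exact Fintype.card_coe _

end Dimension

section Counting

theorem sum_range_natCast (n : ℕ) : ∑ i ∈ Finset.range n, (i : ℚ) = n * (n - 1) / 2 := by
  induction n with
  | zero => simp
  | succ n ih =>
    rw [Finset.sum_range_succ, ih]
    push_cast
    ring

theorem sum_range_min_add_one {M : ℕ} {a b c t : ℤ} (ht : -1 ≤ t) (htM : t ≤ M)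
    (hcut : ∀ α : ℕ, α ≤ M → ((α : ℤ) ≤ t ↔ c ≤ a - b * α)) :
    ((∑ α ∈ Finset.range (M + 1), (min (a - b * α) c + 1) : ℤ) : ℚ) =
      ((c : ℚ) + 1) * (t + 1) + ((M : ℚ) - t) * (a + 1) -
        b * ((M : ℚ) * (M + 1) - t * (t + 1)) / 2 := by
  obtain ⟨T, rfl⟩ : ∃ T : ℕ, t = T - 1 := ⟨(t + 1).toNat, by omega⟩
  have hTM : T ≤ M + 1 := by omega
  have hlow : ∀ α ∈ Finset.range T, min (a - b * α) c + 1 = c + 1 := fun α hα => by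
    rw [Finset.mem_range] at hα
    rw [min_eq_right ((hcut α (by omega)).mp (by omega))]
  have hhigh : ∀ α ∈ Finset.Ico T (M + 1), min (a - b * α) c + 1 = a + 1 - b * α := by
    intro α hα
    rw [Finset.mem_Ico] at hα
    rw [min_eq_left (not_le.mp fun h => by have := (hcut α (by omega)).mpr h; omega).le]
    ring
  rw [← Finset.sum_range_add_sum_Ico _ hTM, Finset.sum_congr rfl hlow,
    Finset.sum_congr rfl hhigh, Finset.sum_Ico_eq_sub _ hTM]
  push_cast
  simp only [Finset.sum_const, Finset.card_range, nsmul_eq_mul, Finset.sum_sub_distrib,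
    ← Finset.mul_sum, sum_range_natCast]
  push_cast
  ring

theorem clamp_bounds {s : ℚ} {m : ℤ} (hm : 0 ≤ m) :
    -1 ≤ (if s < 0 then -1 else if (m : ℚ) < s then m else ⌊s⌋) ∧
      (if s < 0 then -1 else if (m : ℚ) < s then m else ⌊s⌋) ≤ m := by
  split_ifs with h0 hm'
  · omega
  · omega
  · exact ⟨by have := Int.floor_nonneg.mpr (not_lt.mp h0); omega,
      Int.floor_le_iff.mpr (by linarith [not_lt.mp hm'])⟩

theorem le_clamp_iff {s : ℚ} {m α : ℤ} (hα0 : 0 ≤ α) (hαm : α ≤ m) :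
    α ≤ (if s < 0 then -1 else if (m : ℚ) < s then m else ⌊s⌋) ↔ (α : ℚ) ≤ s := by
  split_ifs with h0 hm
  · exact iff_of_false (by omega) fun h => by
      have : (0 : ℚ) ≤ α := by exact_mod_cast hα0
      linarith
  · have : (α : ℚ) ≤ m := by exact_mod_cast hαm
    exact iff_of_true hαm (by linarith)
  · exact Int.le_floor

end Counting

/-- the explicit dimension formula for `C_η(δT,δX)` when `η ≥ 2`. -/
theorem statement8 (η : ℕ) (δT : ℤ) (δX : ℕ) (hη : 2 ≤ η)
    (hδ : 0 ≤ δT + (η : ℤ) * (δX : ℤ)) :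
    let q : ℤ := (Fintype.card F : ℤ)
    let δ : ℤ := δT + (η : ℤ) * (δX : ℤ)
    let m : ℤ := min (Afloor η δT δX) (q - 1)
    let h : ℤ := if 0 ≤ δT ∧ Fintype.card F ≤ δX then min δT q + 1 else 0
    let s : ℚ := ((δ - q : ℤ) : ℚ) / (η : ℚ)
    let st : ℤ := if s < 0 then -1 else if (m : ℚ) < s then m else ⌊s⌋
    (Module.finrank F (Code F η δT δX) : ℚ) =
      ((q : ℚ) + 1) * ((st : ℚ) + 1) + ((m : ℚ) - st) * ((δ : ℚ) + 1)
        - (η : ℚ) * ((m : ℚ) * (m + 1) - (st : ℚ) * (st + 1)) / 2 + (h : ℚ) := by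
  intro q δ m h s st
  have hη0 : 0 < η := by omega
  have hq : 0 < Fintype.card F := Fintype.card_pos
  have hm : (mNat η δT δX (Fintype.card F) : ℤ) = m := mNat_cast hη0 hδ hq
  have hcut (α : ℕ) (hα : α ≤ mNat η δT δX (Fintype.card F)) :
      (α : ℤ) ≤ st ↔ q ≤ δ - η * α := by
    rw [le_clamp_iff (Nat.cast_nonneg α) (by omega), le_div_iff₀ (by positivity)]
    have hcast : ((α : ℤ) : ℚ) * η ≤ ((δ - q : ℤ) : ℚ) ↔ (η : ℤ) * α ≤ δ - q := by
      rw [mul_comm]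
      norm_cast
    rw [hcast]
    constructor <;> intro <;> linarith
  obtain ⟨hst, hstm⟩ : -1 ≤ st ∧ st ≤ m := clamp_bounds (hm ▸ Nat.cast_nonneg _)
  have hcolTop (α : ℕ) : colTop η δT δX α = δ - η * α := by rw [colTop]; ring
  rw [finrank_Code hη hδ, ← Int.cast_natCast, card_basisIdx hη0 hδ hq, Int.cast_add]
  simp only [hcolTop]
  rw [sum_range_min_add_one hst (hm ▸ hstm) hcut, ← hm]
  simp only [Int.cast_natCast]
  rfl

end Hirz
end

section
/- For η = 0 and (δT,δX) ∈ ℕ², the minimum distance of the code C_0(δT,δX) equals d_0(δT,δX) = max(q−δX+1, 1)·max(q−δT+1, 1). -/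
open MvPolynomial

attribute [local instance] Classical.propDecidable

namespace Hirz

variable (F : Type) [Field F] [Fintype F]

/-! For `η = 0` the surface is `ℙ¹ × ℙ¹`, and a monomial of bidegree `(δT, δX)` evaluates at
`([t₀ : t₁], [x₀ : x₁])` to a binary form of degree `δT` in `t` times one of degree `δX` in `x`.
So every word of `C_0(δT, δX)`, read as a function on `ℙ¹ × ℙ¹`, has all its rows and columns in
projective Reed–Solomon codes on `ℙ¹(𝔽_q)`. A nonzero word of the degree-`d` code is nonzero at
`≥ max(q + 1 - d, 1)` points: its dehomogenisation has at most `d` roots, and at most `d - 1` when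
it vanishes at infinity. A nonzero word of the product code has a nonzero row, and each column
through a nonzero entry of that row is nonzero, which gives the lower bound; the product of two
Reed–Solomon words of minimal weight attains it. -/

open Finset Polynomial

section ProductSupport

variable {α β M : Type*} [Fintype α] [Fintype β] [Zero M]

theorem card_filter_prod_eq_sum (f : α → β → M) :
    #{x : α × β | f x.1 x.2 ≠ 0} = ∑ b, #{a | f a b ≠ 0} := by
  simp only [card_filter, Fintype.sum_prod_type_right]

theorem mul_le_card_support_of_rows_cols (f : α → β → M) {m n : ℕ}
    (hrow : ∀ a, (fun b => f a b) ≠ 0 → m ≤ #{b | f a b ≠ 0})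
    (hcol : ∀ b, (fun a => f a b) ≠ 0 → n ≤ #{a | f a b ≠ 0})
    {a₀ : α} {b₀ : β} (h : f a₀ b₀ ≠ 0) :
    m * n ≤ #{x : α × β | f x.1 x.2 ≠ 0} :=
  calc m * n ≤ #{b | f a₀ b ≠ 0} * n :=
        Nat.mul_le_mul_right _ (hrow a₀ (Function.ne_iff.2 ⟨b₀, h⟩))
    _ = ∑ b ∈ {b | f a₀ b ≠ 0}, n := by rw [sum_const, smul_eq_mul]
    _ ≤ ∑ b ∈ {b | f a₀ b ≠ 0}, #{a | f a b ≠ 0} :=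
        sum_le_sum fun b hb => hcol b (Function.ne_iff.2 ⟨a₀, (mem_filter.1 hb).2⟩)
    _ ≤ ∑ b, #{a | f a b ≠ 0} := sum_le_sum_of_subset (subset_univ _)
    _ = #{x : α × β | f x.1 x.2 ≠ 0} := (card_filter_prod_eq_sum f).symm

theorem card_filter_mul_ne_zero {K : Type*} [MulZeroClass K] [NoZeroDivisors K]
    (g : α → K) (h : β → K) :
    #{x : α × β | g x.1 * h x.2 ≠ 0} = #{a | g a ≠ 0} * #{b | h b ≠ 0} := by
  simp only [mul_ne_zero_iff]
  rw [← card_product, ← filter_product, univ_product_univ]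

end ProductSupport

section ProjectiveReedSolomon

variable {K : Type*} [Field K]

/-- `K ⊕ Unit` is `ℙ¹(K)`, with `inl a = [1 : a]` and `inr () = [0 : 1]`; `projEval d p` evaluates
the degree-`d` homogenisation of `p` there. -/
noncomputable def projEval (d : ℕ) : K[X] →ₗ[K] K ⊕ Unit → K :=
  LinearMap.pi (Sum.elim leval fun _ => lcoeff K d)

@[simp] theorem projEval_inl (d : ℕ) (p : K[X]) (a : K) : projEval d p (.inl a) = p.eval a := rfl

@[simp] theorem projEval_inr (d : ℕ) (p : K[X]) (u : Unit) :
    projEval d p (.inr u) = p.coeff d := rfl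

theorem projEval_eq_sum {d : ℕ} {p : K[X]} (hp : p.natDegree ≤ d) :
    projEval d p = ∑ i ∈ range (d + 1), p.coeff i • projEval d (Polynomial.X ^ i) := by
  conv_lhs => rw [p.as_sum_range' (d + 1) (by omega)]
  simp only [map_sum, ← smul_X_eq_monomial, map_smul]

variable (K) in
noncomputable def projRS (d : ℕ) : Submodule K (K ⊕ Unit → K) :=
  (degreeLE K d).map (projEval d)

theorem projEval_mem_projRS {d : ℕ} {p : K[X]} (hp : p.natDegree ≤ d) :
    projEval d p ∈ projRS K d :=
  Submodule.mem_map_of_mem (mem_degreeLE.2 (natDegree_le_iff_degree_le.1 hp))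

variable [Fintype K]

theorem card_filter_projEval_ne_zero (d : ℕ) (p : K[X]) :
    #{s | projEval d p s ≠ 0} = #{a | p.eval a ≠ 0} + if p.coeff d ≠ 0 then 1 else 0 := by
  rw [card_filter, Fintype.sum_sum_type, ← card_filter]
  simp only [projEval_inl, projEval_inr, univ_unique, sum_singleton]
  congr

theorem card_sub_natDegree_le_card_filter_eval_ne_zero {p : K[X]} (hp : p ≠ 0) :
    Fintype.card K - p.natDegree ≤ #{a | p.eval a ≠ 0} := by
  have hroots : #{a | p.eval a = 0} ≤ p.natDegree :=
    card_le_degree_of_subset_roots fun a ha => by simpa [mem_roots hp] using ha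
  have hsplit := card_filter_add_card_filter_not (s := univ) fun a : K => p.eval a = 0
  rw [card_univ] at hsplit
  simp only [ne_eq]
  omega

theorem le_card_filter_projEval_ne_zero {d : ℕ} {p : K[X]} (hp : p.natDegree ≤ d)
    (h : projEval d p ≠ 0) :
    max (Fintype.card K + 1 - d) 1 ≤ #{s | projEval d p s ≠ 0} := by
  have hp0 : p ≠ 0 := by rintro rfl; exact h (map_zero _)
  have hpos : 0 < #{s | projEval d p s ≠ 0} := by
    obtain ⟨s, hs⟩ := Function.ne_iff.1 h
    exact card_pos.2 ⟨s, mem_filter.2 ⟨mem_univ _, hs⟩⟩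
  have haffine := card_sub_natDegree_le_card_filter_eval_ne_zero hp0
  rw [card_filter_projEval_ne_zero] at hpos ⊢
  split_ifs at hpos ⊢ with hd
  · omega
  · have : p.natDegree ≠ d := fun he =>
      hp0 (leadingCoeff_eq_zero.1 (by rw [leadingCoeff, he]; exact not_not.1 hd))
    omega

theorem exists_card_filter_projEval_ne_zero_eq (d : ℕ) :
    ∃ p : K[X], p.natDegree ≤ d ∧
      #{s | projEval d p s ≠ 0} = max (Fintype.card K + 1 - d) 1 := by
  obtain ⟨S, -, hS⟩ :=
    exists_subset_card_eq (s := (univ : Finset K)) (n := min d (Fintype.card K)) (by simp)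
  set p : K[X] := Polynomial.X ^ (d - #S) * ∏ a ∈ S, (Polynomial.X - Polynomial.C a)
  have hprod : (∏ a ∈ S, (Polynomial.X - Polynomial.C a)).Monic :=
    monic_prod_of_monic _ _ fun a _ => monic_X_sub_C a
  have hmonic : p.Monic := (monic_X_pow _).mul hprod
  have hdeg : p.natDegree = d := by
    rw [(monic_X_pow _).natDegree_mul hprod, natDegree_X_pow,
      natDegree_prod_of_monic _ _ fun a _ => monic_X_sub_C a]
    simp only [natDegree_X_sub_C, sum_const, smul_eq_mul, mul_one]
    omega
  have heval : ∀ a, p.eval a ≠ 0 ↔ a ∉ S := by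
    intro a
    simp only [p, Polynomial.eval_mul, Polynomial.eval_pow, Polynomial.eval_X,
      Polynomial.eval_prod, Polynomial.eval_sub, Polynomial.eval_C, ne_eq, mul_eq_zero,
      pow_eq_zero_iff', prod_eq_zero_iff, sub_eq_zero, not_or, not_and_or]
    refine ⟨fun ⟨_, h⟩ ha => h ⟨a, ha, rfl⟩,
      fun ha => ⟨Or.inr ?_, fun ⟨b, hb, hab⟩ => ha (hab ▸ hb)⟩⟩
    have := card_lt_univ_of_notMem ha
    omega
  refine ⟨p, hdeg.le, ?_⟩
  have hcompl : #{a | p.eval a ≠ 0} = #Sᶜ := by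
    congr 1; ext a; simp [heval]
  rw [card_filter_projEval_ne_zero, hcompl, card_compl, if_pos (by
    rw [← hdeg, hmonic.coeff_natDegree]; exact one_ne_zero)]
  omega

theorem le_card_of_mem_projRS {d : ℕ} {w : K ⊕ Unit → K} (hw : w ∈ projRS K d) (h : w ≠ 0) :
    max (Fintype.card K + 1 - d) 1 ≤ #{s | w s ≠ 0} := by
  obtain ⟨p, hp, rfl⟩ := Submodule.mem_map.1 hw
  exact le_card_filter_projEval_ne_zero (natDegree_le_iff_degree_le.2 (mem_degreeLE.1 hp)) h

end ProjectiveReedSolomon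

section ProductCode

variable {K α β : Type*} [Field K]

noncomputable def rowColCode (A : Submodule K (α → K)) (B : Submodule K (β → K)) :
    Submodule K (α × β → K) :=
  (⨅ a, B.comap (LinearMap.funLeft K K (Prod.mk a))) ⊓
    ⨅ b, A.comap (LinearMap.funLeft K K fun a => (a, b))

variable {A : Submodule K (α → K)} {B : Submodule K (β → K)}

theorem mem_rowColCode {f : α × β → K} :
    f ∈ rowColCode A B ↔ (∀ a, (fun b => f (a, b)) ∈ B) ∧ ∀ b, (fun a => f (a, b)) ∈ A := by
  simp only [rowColCode, Submodule.mem_inf, Submodule.mem_iInf, Submodule.mem_comap]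
  rfl

theorem mul_mem_rowColCode {g : α → K} {h : β → K} (hg : g ∈ A) (hh : h ∈ B) :
    (fun x => g x.1 * h x.2) ∈ rowColCode A B :=
  mem_rowColCode.2 ⟨fun a => B.smul_mem (g a) hh, fun b => by
    convert A.smul_mem (h b) hg using 1
    funext a
    exact mul_comm _ _⟩

theorem mul_le_card_of_mem_rowColCode [Fintype α] [Fintype β] {nA nB : ℕ}
    (hA : ∀ g ∈ A, g ≠ 0 → nA ≤ #{a | g a ≠ 0}) (hB : ∀ h ∈ B, h ≠ 0 → nB ≤ #{b | h b ≠ 0})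
    {f : α × β → K} (hf : f ∈ rowColCode A B) (h0 : f ≠ 0) :
    nA * nB ≤ #{x | f x ≠ 0} := by
  obtain ⟨⟨a₀, b₀⟩, hx⟩ := Function.ne_iff.1 h0
  rw [mul_comm]
  exact mul_le_card_support_of_rows_cols (fun a b => f (a, b))
    (fun a => hB _ ((mem_rowColCode.1 hf).1 a)) (fun b => hA _ ((mem_rowColCode.1 hf).2 b)) hx

end ProductCode

section HirzebruchZero

def HIdx.equivProd (K : Type) : HIdx K ≃ (K ⊕ Unit) × (K ⊕ Unit) where
  toFun
    | .inl (a, b) => (.inl a, .inl b)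
    | .inr (.inl b) => (.inr (), .inl b)
    | .inr (.inr (.inl a)) => (.inl a, .inr ())
    | .inr (.inr (.inr _)) => (.inr (), .inr ())
  invFun
    | (.inl a, .inl b) => .inl (a, b)
    | (.inr _, .inl b) => .inr (.inl b)
    | (.inl a, .inr _) => .inr (.inr (.inl a))
    | (.inr _, .inr _) => .inr (.inr (.inr ()))
  left_inv := by rintro (⟨a, b⟩ | b | a | ⟨⟩) <;> rfl
  right_inv := by rintro ⟨(a | ⟨⟩), (b | ⟨⟩)⟩ <;> rfl

theorem wt_eq_card (v : HIdx F → F) :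
    wt F v = #{x | v ((HIdx.equivProd F).symm x) ≠ 0} := by
  rw [wt, Set.ncard_eq_toFinset_card', Set.toFinset_ofPred]
  exact card_equiv (HIdx.equivProd F) (by simp)

variable {K : Type} [Field K]

theorem ev_mon_of_isBideg {δT δX : ℕ} {c : Fin 4 → ℕ} (hc : IsBideg 0 δT δX c) :
    ev K (mon K c) = fun i => projEval δT (Polynomial.X ^ c 1) (HIdx.equivProd K i).1 *
      projEval δX (Polynomial.X ^ c 3) (HIdx.equivProd K i).2 := by
  obtain ⟨hT, hX⟩ := hc
  have hT0 : c 0 = 0 ↔ δT = c 1 := by simp only [Nat.cast_zero, zero_mul, sub_zero] at hT; omega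
  have hX0 : c 2 = 0 ↔ δX = c 3 := by omega
  funext i
  rw [ev, mon, MvPolynomial.eval_monomial, Finsupp.prod_fintype _ _ fun _ => pow_zero _]
  rcases i with ⟨a, b⟩ | b | a | ⟨⟩ <;>
    simp [pt, HIdx.equivProd, Fin.prod_univ_four, zero_pow_eq, hT0, hX0]

theorem code_le_comap_rowColCode (δT δX : ℕ) :
    Code K 0 δT δX ≤ (rowColCode (projRS K δT) (projRS K δX)).comap
      (LinearMap.funLeft K K (HIdx.equivProd K).symm) := by
  rw [Code, Submodule.span_le]
  rintro _ ⟨_, ⟨c, hc, rfl⟩, rfl⟩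
  rw [SetLike.mem_coe, Submodule.mem_comap, ev_mon_of_isBideg hc]
  have hT : c 1 ≤ δT := by have := hc.1; push_cast at this; omega
  have hX : c 3 ≤ δX := by have := hc.2; omega
  convert mul_mem_rowColCode (projEval_mem_projRS (natDegree_X_pow_le (R := K) _ |>.trans hT))
    (projEval_mem_projRS (natDegree_X_pow_le (R := K) _ |>.trans hX)) using 1
  funext x
  simp [LinearMap.funLeft_apply]

theorem mul_projEval_X_pow_mem_code {δT δX a b : ℕ} (ha : a ≤ δT) (hb : b ≤ δX) :
    (fun i => projEval δT (Polynomial.X ^ a) (HIdx.equivProd K i).1 *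
      projEval δX (Polynomial.X ^ b) (HIdx.equivProd K i).2) ∈ Code K 0 δT δX := by
  have hc : IsBideg 0 δT δX ![δT - a, a, δX - b, b] := by
    constructor <;> simp <;> omega
  have := ev_mon_of_isBideg (K := K) hc
  simp only [Matrix.cons_val] at this
  exact this ▸ Submodule.subset_span ⟨_, ⟨_, hc, rfl⟩, rfl⟩

theorem mul_projEval_mem_code {δT δX : ℕ} {p p' : K[X]} (hp : p.natDegree ≤ δT)
    (hp' : p'.natDegree ≤ δX) :
    (fun i => projEval δT p (HIdx.equivProd K i).1 * projEval δX p' (HIdx.equivProd K i).2) ∈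
      Code K 0 δT δX := by
  have hsum : (fun i => projEval δT p (HIdx.equivProd K i).1 *
      projEval δX p' (HIdx.equivProd K i).2) =
      ∑ a ∈ range (δT + 1), ∑ b ∈ range (δX + 1), (p.coeff a * p'.coeff b) •
        fun i => projEval δT (Polynomial.X ^ a) (HIdx.equivProd K i).1 *
          projEval δX (Polynomial.X ^ b) (HIdx.equivProd K i).2 := by
    funext i
    simp only [projEval_eq_sum hp, projEval_eq_sum hp', Finset.sum_apply, Pi.smul_apply,
      smul_eq_mul, sum_mul_sum]
    exact sum_congr rfl fun a _ => sum_congr rfl fun b _ => by ring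
  rw [hsum]
  exact Submodule.sum_mem _ fun a ha => Submodule.sum_mem _ fun b hb =>
    Submodule.smul_mem _ _ (mul_projEval_X_pow_mem_code (by simpa [Nat.lt_succ_iff] using ha)
      (by simpa [Nat.lt_succ_iff] using hb))

variable {F} in
theorem mul_le_wt_of_mem_code {δT δX : ℕ} {v : HIdx F → F} (hv : v ∈ Code F 0 δT δX)
    (h0 : v ≠ 0) :
    max (Fintype.card F + 1 - δT) 1 * max (Fintype.card F + 1 - δX) 1 ≤ wt F v := by
  rw [wt_eq_card]
  refine mul_le_card_of_mem_rowColCode (fun g hg => le_card_of_mem_projRS hg)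
    (fun h hh => le_card_of_mem_projRS hh) (code_le_comap_rowColCode δT δX hv) fun h => h0 ?_
  funext i
  simpa using congrFun h (HIdx.equivProd F i)

theorem exists_mem_code_wt_eq (δT δX : ℕ) :
    ∃ v ∈ Code F 0 δT δX,
      wt F v = max (Fintype.card F + 1 - δT) 1 * max (Fintype.card F + 1 - δX) 1 := by
  obtain ⟨p, hp, hpw⟩ := exists_card_filter_projEval_ne_zero_eq (K := F) δT
  obtain ⟨p', hp', hpw'⟩ := exists_card_filter_projEval_ne_zero_eq (K := F) δX
  refine ⟨_, mul_projEval_mem_code hp hp', ?_⟩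
  rw [wt_eq_card, ← hpw, ← hpw', ← card_filter_mul_ne_zero]
  simp

end HirzebruchZero

/-- for `η = 0`, `d_0(δT,δX) = max(q−δX+1,1)·max(q−δT+1,1)`. -/
theorem statement14 (δT δX : ℕ) :
    (dmin F 0 (δT : ℤ) δX : ℤ) =
      max ((Fintype.card F : ℤ) - δX + 1) 1 *
        max ((Fintype.card F : ℤ) - δT + 1) 1 := by
  obtain ⟨v, hv, hwt⟩ := exists_mem_code_wt_eq F δT δX
  have hv0 : v ≠ 0 := by
    rintro rfl
    simp [wt] at hwt
  have hleast : IsLeast {w | ∃ v ∈ Code F 0 δT δX, v ≠ 0 ∧ wt F v = w}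
      (max (Fintype.card F + 1 - δT) 1 * max (Fintype.card F + 1 - δX) 1) :=
    ⟨⟨v, hv, hv0, hwt⟩, by rintro _ ⟨w, hw, hw0, rfl⟩; exact mul_le_wt_of_mem_code hw hw0⟩
  rw [dmin, hleast.csInf_eq, mul_comm]
  push_cast
  congr 1 <;> omega

end Hirz
end
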